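/- arXiv:2007.12373 — 8 statements merged into one kernel-verified Lean document; each statement's English description precedes it below -/
import Mathlib

section
/- Let τ be an infinite cardinal, let X be a Hausdorff space that is a_τ-subcompact, and let C be a subset of X with |C| ≤ τ. Then the subspace X \ C is a_τ-subcompact. Likewise, if X is strictly a_τ-subcompact then X \ C is strictly a_τ-subcompact. -/
open Cardinal Topology

universe u

/-- A Hausdorff space is *subcompact* if it admits a condensation (continuous bijection)
onto a compact Hausdorff space. -/
def Subcompact (X : Type u) [TopologicalSpace X] : Prop :=
  ∃ (Y : Type u) (_ : TopologicalSpace Y), CompactSpace Y ∧ T2Space Y ∧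
    ∃ f : X → Y, Continuous f ∧ Function.Bijective f

/-- A compact Hausdorff space `X` is an `a_τ`-space if for every `C ⊆ X` with `#C ≤ τ`
there is a condensation from the subspace `X \ C` onto a compact Hausdorff space. -/
def ATauSpace (τ : Cardinal.{u}) (X : Type u) [TopologicalSpace X] : Prop :=
  CompactSpace X ∧ T2Space X ∧ ∀ C : Set X, #C ≤ τ → Subcompact ↥(Cᶜ)

/-- A compact Hausdorff space `X` is a strictly `a_τ`-space if for every `C ⊆ X` with
`#C ≤ τ` there is a condensation from `X \ C` onto a compact Hausdorff space `K`
extending to a continuous map `X → K` (encoded: a continuous `g : X → K` whose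
restriction to `X \ C` is bijective). -/
def StrictATauSpace (τ : Cardinal.{u}) (X : Type u) [TopologicalSpace X] : Prop :=
  CompactSpace X ∧ T2Space X ∧ ∀ C : Set X, #C ≤ τ →
    ∃ (K : Type u) (_ : TopologicalSpace K), CompactSpace K ∧ T2Space K ∧
      ∃ g : X → K, Continuous g ∧ Function.Bijective fun x : ↥(Cᶜ) => g x

/-- A Hausdorff space `X` is `a_τ`-subcompact if for every `C ⊆ X` with `#C ≤ τ` there
is a condensation from `X \ C` onto an `a_τ`-space. -/
def ATauSubcompact (τ : Cardinal.{u}) (X : Type u) [TopologicalSpace X] : Prop :=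
  ∀ C : Set X, #C ≤ τ →
    ∃ (Y : Type u) (_ : TopologicalSpace Y), ATauSpace τ Y ∧
      ∃ f : ↥(Cᶜ) → Y, Continuous f ∧ Function.Bijective f

/-- A Hausdorff space `X` is strictly `a_τ`-subcompact if for every `C ⊆ X` with `#C ≤ τ`
there is a condensation from `X \ C` onto a strictly `a_τ`-space `Y` extending to a
continuous map `X → Y`. -/
def StrictATauSubcompact (τ : Cardinal.{u}) (X : Type u) [TopologicalSpace X] : Prop :=
  ∀ C : Set X, #C ≤ τ →
    ∃ (Y : Type u) (_ : TopologicalSpace Y), StrictATauSpace τ Y ∧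
      ∃ g : X → Y, Continuous g ∧ Function.Bijective fun x : ↥(Cᶜ) => g x

/-- A Hausdorff space `X` is almost strictly `a_τ`-subcompact if for every `C ⊆ X` with
`#C ≤ τ` there is a condensation from `X \ C` onto a compact Hausdorff space `Y`
extending to a continuous map `X → Y`. -/
def AlmostStrictATauSubcompact (τ : Cardinal.{u}) (X : Type u) [TopologicalSpace X] : Prop :=
  ∀ C : Set X, #C ≤ τ →
    ∃ (Y : Type u) (_ : TopologicalSpace Y), CompactSpace Y ∧ T2Space Y ∧
      ∃ g : X → Y, Continuous g ∧ Function.Bijective fun x : ↥(Cᶜ) => g x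


lemma aux_homeo {X : Type u} [TopologicalSpace X] (C : Set X) (D : Set ↥(Cᶜ)) :
    ∃ h : ↥(Dᶜ) → ↥((C ∪ Subtype.val '' D)ᶜ), Continuous h ∧ Function.Bijective h ∧
      ∀ x : ↥(Dᶜ), ((h x : X)) = ((x : ↥(Cᶜ)) : X) := by
  have mem : ∀ x : ↥(Dᶜ), ((x : ↥(Cᶜ)) : X) ∈ (C ∪ Subtype.val '' D)ᶜ := by
    intro x
    rintro (hc | ⟨d, hd, heq⟩)
    · exact (x : ↥(Cᶜ)).2 hc
    · have : d = (x : ↥(Cᶜ)) := Subtype.val_injective heq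
      exact x.2 (this ▸ hd)
  refine ⟨fun x => ⟨((x : ↥(Cᶜ)) : X), mem x⟩, ?_, ⟨?_, ?_⟩, fun _ => rfl⟩
  · exact (continuous_subtype_val.comp continuous_subtype_val).subtype_mk _
  · intro a b hab
    simp only [Subtype.mk.injEq] at hab
    exact Subtype.ext (Subtype.ext hab)
  · rintro ⟨y, hy⟩
    have hyC : y ∉ C := fun hc => hy (Or.inl hc)
    have hyD : (⟨y, hyC⟩ : ↥(Cᶜ)) ∉ D := fun hd => hy (Or.inr ⟨_, hd, rfl⟩)
    exact ⟨⟨⟨y, hyC⟩, hyD⟩, rfl⟩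

lemma aux_card {X : Type u} (τ : Cardinal.{u}) (hτ : ℵ₀ ≤ τ) (C : Set X) (hC : #C ≤ τ)
    (D : Set ↥(Cᶜ)) (hD : #D ≤ τ) : #↥(C ∪ Subtype.val '' D) ≤ τ := by
  refine (Cardinal.mk_union_le _ _).trans (Cardinal.add_le_of_le hτ hC ?_)
  exact (Cardinal.mk_image_le).trans hD

/-- If `X` is (strictly) `a_τ`-subcompact and `#C ≤ τ`, then the subspace
`X \ C` is (strictly) `a_τ`-subcompact. -/
theorem stmt_0 (τ : Cardinal.{u}) (hτ : ℵ₀ ≤ τ)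
    (X : Type u) [TopologicalSpace X] [T2Space X]
    (C : Set X) (hC : #C ≤ τ) :
    (ATauSubcompact τ X → ATauSubcompact τ ↥(Cᶜ)) ∧
    (StrictATauSubcompact τ X → StrictATauSubcompact τ ↥(Cᶜ)) := by
  constructor
  · intro hX D hD
    obtain ⟨Y, tY, hY, f, hf, hbij⟩ := hX (C ∪ Subtype.val '' D) (aux_card τ hτ C hC D hD)
    obtain ⟨h, hc, hb, _⟩ := aux_homeo C D
    exact ⟨Y, tY, hY, f ∘ h, hf.comp hc, hbij.comp hb⟩
  · intro hX D hD
    obtain ⟨Y, tY, hY, g, hg, hbij⟩ := hX (C ∪ Subtype.val '' D) (aux_card τ hτ C hC D hD)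
    obtain ⟨h, hc, hb, hval⟩ := aux_homeo C D
    refine ⟨Y, tY, hY, g ∘ Subtype.val, hg.comp continuous_subtype_val, ?_⟩
    have : (fun x : ↥(Dᶜ) => (g ∘ Subtype.val) (x : ↥(Cᶜ)))
        = (fun y : ↥((C ∪ Subtype.val '' D)ᶜ) => g y) ∘ h := by
      funext x
      simp [Function.comp, hval x]
    rw [this]
    exact hbij.comp hb
end

section
/- There exists a strictly a_{ℵ₀}-subcompact Hausdorff space X such that X is not homeomorphic to Y \ C for any a_{ℵ₀}-space Y and any countable subset C of Y. -/
open Cardinal Topology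

universe u

open Filter Function Set Uniformity

/-!
The space is `E ⊕ D`, where `E` is a countable dense subset of the Cantor space `Y` and `D` is a
discrete space of size continuum. Removing a countable set from `E ⊕ D`, the rest of `E` is sent
into `Y` by inclusion and the rest of `D` bijectively onto the remaining points of `Y`; this
condensation is defined on all of `E ⊕ D`. The Cantor space is a strictly `a_ℵ₀`-space: every
point `a` of a countable set `C` is glued to a partner `p a ∉ C` with `p a → a`, and since the
pairs shrink to the diagonal the gluing relation is closed, so the quotient is compact Hausdorff.
Finally, `E` is a nonempty open subset of `E ⊕ D` that is countable without isolated points,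
hence meagre, so `E ⊕ D` is not a Baire space; but removing a countable set from a compact
Hausdorff space leaves a dense `Gδ`, which is Baire.
-/

theorem exists_injective_forall_mem_of_infinite {ι α : Type*} [Countable ι] {s : ι → Set α}
    (hs : ∀ i, (s i).Infinite) : ∃ f : ι → α, Injective f ∧ ∀ i, f i ∈ s i := by
  classical
  obtain ⟨e, he⟩ := Countable.exists_injective_nat ι
  -- Hall's condition holds for finite subsets `t i ⊆ s i` of size `e i + 1`.
  choose t hts htcard using fun i => (hs i).exists_subset_card_eq (e i + 1)
  obtain ⟨f, hf, hft⟩ := (Finset.all_card_le_biUnion_card_iff_exists_injective t).1 fun A => by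
    rcases A.eq_empty_or_nonempty with rfl | hA
    · simp
    obtain ⟨i, hi, hmax⟩ := A.exists_max_image e hA
    calc A.card = (A.image e).card := (Finset.card_image_of_injective A he).symm
      _ ≤ (Finset.range (e i + 1)).card := Finset.card_le_card fun n hn => by
          obtain ⟨j, hj, rfl⟩ := Finset.mem_image.1 hn
          exact Finset.mem_range.2 (Nat.lt_succ_of_le (hmax j hj))
      _ = (t i).card := by simp [htcard]
      _ ≤ (A.biUnion t).card := Finset.card_le_card (Finset.subset_biUnion_of_mem t hi)
  exact ⟨f, hf, fun i => hts i (hft i)⟩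

section Topology

variable {X : Type*} [TopologicalSpace X]

theorem IsClosedMap.normalSpace {Y : Type*} [TopologicalSpace Y] [NormalSpace X] {f : X → Y}
    (hf : IsClosedMap f) (hcont : Continuous f) (hsurj : Surjective f) : NormalSpace Y where
  normal s t hs ht hst := by
    obtain ⟨U, V, hU, hV, hsU, htV, hUV⟩ :=
      NormalSpace.normal _ _ (hs.preimage hcont) (ht.preimage hcont) (hst.preimage f)
    refine ⟨(f '' Uᶜ)ᶜ, (f '' Vᶜ)ᶜ, (hf _ hU.isClosed_compl).isOpen_compl,
      (hf _ hV.isClosed_compl).isOpen_compl, ?_, ?_, ?_⟩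
    · rintro _ hy ⟨x, hxU, rfl⟩
      exact hxU (hsU hy)
    · rintro _ hy ⟨x, hxV, rfl⟩
      exact hxV (htV hy)
    · refine Set.disjoint_left.2 fun y hyU hyV => ?_
      obtain ⟨x, rfl⟩ := hsurj y
      exact Set.disjoint_left.1 hUV (not_not.1 fun h => hyU ⟨x, h, rfl⟩)
        (not_not.1 fun h => hyV ⟨x, h, rfl⟩)

theorem isClosedMap_quotient_mk_of_isClosed [CompactSpace X] (s : Setoid X)
    (hs : IsClosed {x : X × X | s x.1 x.2}) : IsClosedMap (Quotient.mk s) := by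
  intro F hF
  rw [← isQuotientMap_quotient_mk'.isClosed_preimage]
  change IsClosed (Quotient.mk s ⁻¹' _)
  have : Quotient.mk s ⁻¹' (Quotient.mk s '' F) =
      Prod.fst '' ({x : X × X | s x.1 x.2} ∩ Prod.snd ⁻¹' F) := by
    ext x
    simp [Quotient.eq, Setoid.comm' s, and_comm]
  rw [this]
  exact isClosedMap_fst_of_compactSpace _ (hs.inter (hF.preimage continuous_snd))

theorem t2Space_quotient_of_isClosed [CompactSpace X] [T2Space X] (s : Setoid X)
    (hs : IsClosed {x : X × X | s x.1 x.2}) : T2Space (Quotient s) := by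
  have hcl := isClosedMap_quotient_mk_of_isClosed s hs
  have : T1Space (Quotient s) := ⟨fun y => by
    obtain ⟨x, rfl⟩ := Quotient.mk_surjective y
    simpa using hcl _ (isClosed_singleton (x := x))⟩
  have : NormalSpace (Quotient s) :=
    hcl.normalSpace continuous_quotient_mk' Quotient.mk_surjective
  infer_instance

theorem Set.Countable.isMeagre [T1Space X] [PerfectSpace X] {s : Set X} (hs : s.Countable) :
    IsMeagre s := by
  rw [← biUnion_of_singleton s]
  exact isMeagre_biUnion hs fun x _ =>
    (isClosed_singleton.isNowhereDense_iff.2 (interior_singleton x)).isMeagre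

theorem IsOpen.not_countable [BaireSpace X] [T1Space X] [PerfectSpace X] {U : Set X}
    (hU : IsOpen U) (hne : U.Nonempty) : ¬U.Countable :=
  fun hc => not_isMeagre_of_isOpen hU hne hc.isMeagre

theorem PerfectSpace.uncountable [BaireSpace X] [T1Space X] [PerfectSpace X] [Nonempty X] :
    Uncountable X :=
  ⟨fun _ => (isOpen_univ (X := X)).not_countable univ_nonempty countable_univ⟩

theorem Dense.perfectSpace [T1Space X] [PerfectSpace X] {E : Set X} (hE : Dense E) :
    PerfectSpace E := by
  refine ⟨fun x _ => accPt_iff_nhds.2 fun U hU => ?_⟩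
  obtain ⟨u, hu, huU⟩ := (mem_nhds_subtype E x U).1 hU
  obtain ⟨V, hVu, hVo, hxV⟩ := mem_nhds_iff.1 hu
  obtain ⟨y, hyV, hyx⟩ := accPt_iff_nhds.1 (PerfectSpace.univ_preperfect (x : X) trivial) V
    (hVo.mem_nhds hxV)
  obtain ⟨z, ⟨hzV, hzx⟩, hzE⟩ :=
    hE.inter_open_nonempty (V \ {(x : X)}) (hVo.sdiff isClosed_singleton) ⟨y, hyV.1, hyx⟩
  exact ⟨⟨z, hzE⟩, ⟨huU (hVu hzV), trivial⟩, fun h => hzx (congrArg Subtype.val h)⟩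

instance Pi.perfectSpace {ι α : Type*} [Infinite ι] [TopologicalSpace α] [Nontrivial α] :
    PerfectSpace (ι → α) := by
  classical
  refine ⟨fun x _ => accPt_iff_nhds.2 fun U hU => ?_⟩
  rw [nhds_pi, Filter.mem_pi'] at hU
  obtain ⟨I, t, ht, hIt⟩ := hU
  obtain ⟨j, hj⟩ := Infinite.exists_notMem_finset I
  obtain ⟨b, hb⟩ := exists_ne (x j)
  refine ⟨update x j b, ⟨hIt fun i hi => ?_, trivial⟩,
    fun h => hb (by simpa using congrFun h j)⟩
  rw [update_of_ne (ne_of_mem_of_not_mem hi hj)]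
  exact mem_of_mem_nhds (ht i)

end Topology

theorem isClosed_diagonal_union_range {X ι : Type*} [UniformSpace X] [T0Space X]
    {f : ι → X × X} (hf : Tendsto f cofinite (𝓤 X)) : IsClosed (diagonal X ∪ range f) := by
  refine isClosed_of_closure_subset fun z hz => ?_
  by_contra hzn
  obtain ⟨W, hW, hzW⟩ : ∃ W ∈ 𝓤 X, z ∉ W := by
    by_contra! h
    exact hzn (Or.inl (t0Space_iff_uniformity.1 ‹_› z.1 z.2 h))
  obtain ⟨V, ⟨hV, hVc⟩, hVW⟩ := uniformity_hasBasis_closed.mem_iff.1 hW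
  have hfin : {i | f i ∉ V}.Finite := hf hV
  have hsub : diagonal X ∪ range f ⊆ V ∪ f '' {i | f i ∉ V} := by
    rintro ⟨x, y⟩ (h | ⟨i, hi⟩)
    · obtain rfl : x = y := h
      exact Or.inl (refl_mem_uniformity hV)
    · by_cases hV : f i ∈ V
      exacts [Or.inl (hi ▸ hV), Or.inr ⟨i, hV, hi⟩]
  rcases closure_minimal hsub (hVc.union (hfin.image f).isClosed) hz with h | ⟨i, -, rfl⟩
  exacts [hzW (hVW h), hzn (Or.inr ⟨i, rfl⟩)]

section Partner

variable {X : Type*} {C : Set X} (p : C → X)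

def PartnerRel (x y : X) : Prop :=
  x = y ∨ ∃ a : C, (x = a ∧ y = p a) ∨ (y = a ∧ x = p a)

variable {p}

theorem partnerRel_equivalence (hp : Injective p) (hpC : ∀ a, p a ∉ C) :
    Equivalence (PartnerRel p) where
  refl _ := Or.inl rfl
  symm := by
    rintro x y (rfl | ⟨a, h | h⟩)
    exacts [Or.inl rfl, Or.inr ⟨a, Or.inr h⟩, Or.inr ⟨a, Or.inl h⟩]
  trans := by
    rintro x y z (rfl | ⟨a, ⟨rfl, rfl⟩ | ⟨rfl, rfl⟩⟩) h
    · exact h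
    · rcases h with rfl | ⟨b, ⟨hb, -⟩ | ⟨rfl, hb⟩⟩
      · exact Or.inr ⟨a, Or.inl ⟨rfl, rfl⟩⟩
      · exact absurd (hb ▸ b.2) (hpC a)
      · exact Or.inl (congrArg Subtype.val (hp hb))
    · rcases h with rfl | ⟨b, ⟨hb, rfl⟩ | ⟨-, hb⟩⟩
      · exact Or.inr ⟨a, Or.inr ⟨rfl, rfl⟩⟩
      · exact Or.inl (by rw [Subtype.ext hb])
      · exact absurd (hb ▸ a.2) (hpC b)

def partnerSetoid (hp : Injective p) (hpC : ∀ a, p a ∉ C) : Setoid X :=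
  ⟨PartnerRel p, partnerRel_equivalence hp hpC⟩

theorem isClosed_partnerRel [UniformSpace X] [T0Space X]
    (hlim : Tendsto (fun a : C => ((a : X), p a)) cofinite (𝓤 X)) :
    IsClosed {x : X × X | PartnerRel p x.1 x.2} := by
  have hS := isClosed_diagonal_union_range hlim
  convert hS.union (hS.preimage continuous_swap) using 1
  ext ⟨x, y⟩
  simp only [PartnerRel, mem_ofPred_eq, mem_union, mem_diagonal_iff, mem_range, mem_preimage,
    Prod.swap_prod_mk, Prod.mk.injEq]
  grind

theorem bijective_partnerSetoid_mk (hp : Injective p) (hpC : ∀ a, p a ∉ C) :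
    Bijective fun x : ↥(Cᶜ) => Quotient.mk (partnerSetoid hp hpC) (x : X) := by
  refine ⟨fun x y h => Subtype.ext ?_, fun q => ?_⟩
  · rcases Quotient.exact h with h | ⟨a, ⟨hx, -⟩ | ⟨hy, -⟩⟩
    exacts [h, absurd (hx ▸ a.2) x.2, absurd (hy ▸ a.2) y.2]
  · obtain ⟨w, rfl⟩ := Quotient.mk_surjective q
    by_cases hw : w ∈ C
    · exact ⟨⟨p ⟨w, hw⟩, hpC _⟩,
        Quotient.sound (Or.inr ⟨⟨w, hw⟩, Or.inr ⟨rfl, rfl⟩⟩)⟩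
    · exact ⟨⟨w, hw⟩, rfl⟩

theorem exists_injective_partner [MetricSpace X] [PerfectSpace X] [BaireSpace X]
    (hC : C.Countable) :
    ∃ p : C → X, Injective p ∧ (∀ a, p a ∉ C) ∧
      Tendsto (fun a : C => ((a : X), p a)) cofinite (𝓤 X) := by
  have : Countable C := hC.to_subtype
  obtain ⟨e, he⟩ := Countable.exists_injective_nat C
  have hinf : ∀ a : C, (Metric.ball (a : X) (1 / (e a + 1)) \ C).Infinite := fun a hfin =>
    Metric.isOpen_ball.not_countable (Metric.nonempty_ball.2 (by positivity))
      ((hfin.countable.union hC).mono (subset_sdiff_union _ _))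
  obtain ⟨p, hp, hpmem⟩ := exists_injective_forall_mem_of_infinite hinf
  refine ⟨p, hp, fun a => (hpmem a).2, tendsto_uniformity_iff_dist_tendsto_zero.2 ?_⟩
  have hr : Tendsto (fun a : C => (1 : ℝ) / (e a + 1)) cofinite (𝓝 0) :=
    tendsto_one_div_add_atTop_nhds_zero_nat.comp (Nat.cofinite_eq_atTop ▸ he.tendsto_cofinite)
  exact squeeze_zero (fun _ => dist_nonneg)
    (fun a => (Metric.mem_ball'.1 (hpmem a).1).le) hr

end Partner

theorem strictATauSpace_aleph0_of_perfectSpace {Y : Type u} [TopologicalSpace Y] [CompactSpace Y]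
    [T2Space Y] [TopologicalSpace.MetrizableSpace Y] [PerfectSpace Y] :
    StrictATauSpace ℵ₀ Y := by
  refine ⟨‹_›, ‹_›, fun C hC => ?_⟩
  let := TopologicalSpace.metrizableSpaceMetric Y
  obtain ⟨p, hp, hpC, hlim⟩ := exists_injective_partner (le_aleph0_iff_set_countable.1 hC)
  exact ⟨_, _, inferInstance, t2Space_quotient_of_isClosed _ (isClosed_partnerRel hlim),
    _, continuous_quotient_mk', bijective_partnerSetoid_mk hp hpC⟩

theorem strictATauSubcompact_aleph0_sum {E D Y : Type u} [TopologicalSpace E] [TopologicalSpace D]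
    [DiscreteTopology D] [TopologicalSpace Y] [Countable E] [Uncountable Y]
    (hY : StrictATauSpace ℵ₀ Y) {f : E → Y} (hf : Continuous f) (hfi : Injective f)
    (hD : #D = #Y) : StrictATauSubcompact ℵ₀ (E ⊕ D) := by
  classical
  intro C hC
  have hCc := le_aleph0_iff_set_countable.1 hC
  set A := f '' {e | Sum.inl e ∉ C}
  have hcount : ∀ {α : Type u} [Uncountable α] {s : Set α}, s.Countable → #s < #α :=
    fun hs => (le_aleph0_iff_set_countable.2 hs).trans_lt (aleph0_lt_mk_iff.2 inferInstance)
  obtain ⟨φ⟩ : Nonempty (↥(Sum.inr ⁻¹' C)ᶜ ≃ ↥Aᶜ) := by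
    have : Uncountable D := aleph0_lt_mk_iff.1 (hD ▸ aleph0_lt_mk_iff.2 inferInstance)
    refine Cardinal.eq.1 ?_
    rw [mk_compl_of_infinite _ (hcount (hCc.preimage Sum.inr_injective)),
      mk_compl_of_infinite _ (hcount ((countable_range f).mono (image_subset_range _ _))), hD]
  let g : D → Y := fun d => if h : Sum.inr d ∈ C then Classical.arbitrary Y else φ ⟨d, h⟩
  have hg : ∀ d (hd : Sum.inr d ∉ C), g d = φ ⟨d, hd⟩ := fun d hd => dif_neg hd
  have hgA : ∀ d, Sum.inr d ∉ C → g d ∉ A := fun d hd => hg d hd ▸ (φ ⟨d, hd⟩).2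
  refine ⟨Y, _, hY, Sum.elim f g, continuous_sumElim.2 ⟨hf, continuous_of_discreteTopology⟩,
    ?_, fun y => ?_⟩
  · rintro ⟨x | x, hx⟩ ⟨y | y, hy⟩ h
    · exact Subtype.ext (congrArg Sum.inl (hfi h))
    · have h : f x = g y := h
      exact (hgA y hy (h ▸ ⟨x, hx, rfl⟩)).elim
    · have h : g x = f y := h
      exact (hgA x hx (h ▸ ⟨y, hy, rfl⟩)).elim
    · have := φ.injective (Subtype.ext ((hg x hx).symm.trans (h.trans (hg y hy))))
      exact Subtype.ext (congrArg (Sum.inr ∘ Subtype.val) this)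
  · by_cases hy : y ∈ A
    · obtain ⟨e, he, rfl⟩ := hy
      exact ⟨⟨Sum.inl e, he⟩, rfl⟩
    · refine ⟨⟨Sum.inr (φ.symm ⟨y, hy⟩), (φ.symm ⟨y, hy⟩).2⟩, ?_⟩
      simp [hg _ (φ.symm ⟨y, hy⟩).2]

/-- there is a strictly `a_ℵ₀`-subcompact Hausdorff space `X` which is not
homeomorphic to `Y \ C` for any `a_ℵ₀`-space `Y` and countable `C ⊆ Y`. -/
theorem stmt_1 :
    ∃ (X : Type u) (_ : TopologicalSpace X), T2Space X ∧
      StrictATauSubcompact Cardinal.aleph0 X ∧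
      ∀ (Y : Type u) (_ : TopologicalSpace Y), ATauSpace Cardinal.aleph0 Y →
        ∀ C : Set Y, C.Countable → IsEmpty (X ≃ₜ ↥(Cᶜ)) := by
  have : Uncountable (ℕ → ULift.{u} Bool) := PerfectSpace.uncountable
  obtain ⟨E, hEc, hEd⟩ := TopologicalSpace.exists_countable_dense (ℕ → ULift.{u} Bool)
  have : Countable E := hEc.to_subtype
  have : Nonempty E := hEd.nonempty.to_subtype
  have : PerfectSpace E := hEd.perfectSpace
  let _ : TopologicalSpace (Set ℕ) := ⊥
  have : DiscreteTopology (Set ℕ) := ⟨rfl⟩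
  have hD : #(ULift.{u} (Set ℕ)) = #(ℕ → ULift.{u} Bool) := by simp
  refine ⟨E ⊕ ULift.{u} (Set ℕ), inferInstance, inferInstance,
    strictATauSubcompact_aleph0_sum strictATauSpace_aleph0_of_perfectSpace continuous_subtype_val
      Subtype.val_injective hD,
    fun Y _ hY C hC => ⟨fun e => ?_⟩⟩
  obtain ⟨_, _, -⟩ := hY
  have : BaireSpace ↥Cᶜ := hC.isGδ_compl.baireSpace_of_t2Space_locallyCompactSpace
  have : BaireSpace (E ⊕ ULift.{u} (Set ℕ)) := e.symm.baireSpace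
  have : BaireSpace E := (Topology.IsOpenEmbedding.inl (Y := ULift.{u} (Set ℕ))).baireSpace
  exact (PerfectSpace.uncountable (X := E)).not_countable ‹_›
end

section
/- Let τ be an infinite cardinal and let X = Z ⊕ (⊕{X_α : α ∈ A}) be the topological sum, where |A| = τ, each X_α is an a_τ-space with |X_α| > τ, and Z is a compact Hausdorff space. Then X is almost a_τ-subcompact, i.e., for every S ⊆ X with |S| ≤ τ there is a condensation from X \ S onto a compact Hausdorff space. -/
open Cardinal Topology

universe u

/-!
Write `S_Z` and `S_a` for the traces of `S` on `Z` and on `X_a`. Each `X_a \ S_a` is nonempty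
(as `|X_a| > τ`) and condenses onto a compact `K_a`, so it suffices to condense
`(Z \ S_Z) ⊕ Σ_a K_a`. As `|S_Z| ≤ |A| = τ` is infinite, `A` can index the points of `S_Z`, the
points of `A` and the point at infinity of the one-point compactification `A⁺` of the discrete
`A`; that is, `(Z \ S_Z) ⊕ A` is in bijection with `T = Z ⊕ A⁺` by some `e ⊕ t` with `e`
continuous. Now attach each `K_a` at a base point `m a` to `T` at `t a`: the map into
`T × Π_a K_a` sending `z ↦ (e z, m)` and `k ∈ K_a ↦ (t a, m[a ↦ k])` is a continuous injection
with closed range, since near a point whose second coordinate differs from `m` at `a` the range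
is just the compact slice over `t a`.
-/

open Function Set

theorem Subcompact.of_continuous_bijective {X Y : Type u} [TopologicalSpace X]
    [TopologicalSpace Y] {f : X → Y} (hf : Continuous f) (hfb : Bijective f)
    (hY : Subcompact Y) : Subcompact X := by
  obtain ⟨K, _, hK, hK2, g, hg, hgb⟩ := hY
  exact ⟨K, _, hK, hK2, g ∘ f, hg.comp hf, hgb.comp hfb⟩

theorem Subcompact.of_isClosed_range {X Y : Type u} [TopologicalSpace X] [TopologicalSpace Y]
    [CompactSpace Y] [T2Space Y] {f : X → Y} (hf : Continuous f) (hfi : Injective f)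
    (hfc : IsClosed (range f)) : Subcompact X :=
  ⟨range f, inferInstance, isCompact_iff_compactSpace.1 hfc.isCompact, inferInstance,
    rangeFactorization f, hf.subtype_mk _,
    rangeFactorization_injective.2 hfi, rangeFactorization_surjective⟩

theorem Topology.IsEmbedding.sumMap {X Y X' Y' : Type*} [TopologicalSpace X]
    [TopologicalSpace Y] [TopologicalSpace X'] [TopologicalSpace Y'] {f : X → X'} {g : Y → Y'}
    (hf : IsEmbedding f) (hg : IsEmbedding g) : IsEmbedding (Sum.map f g) :=
  (IsEmbedding.inl.comp hf).sumElim_of_separatedNhds (IsEmbedding.inr.comp hg)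
    ⟨_, _, isOpen_range_inl, isOpen_range_inr, range_comp_subset_range _ _,
      range_comp_subset_range _ _, isCompl_range_inl_range_inr.disjoint⟩

section Wedge

variable {T U A : Type u} {K : A → Type u}

def wedgeMap [DecidableEq A] (e : U → T) (t : A → T) (m : ∀ a, K a) :
    U ⊕ (Σ a, K a) → T × ∀ a, K a :=
  Sum.elim (fun u => (e u, m)) (fun p => (t p.1, update m p.1 p.2))

variable [DecidableEq A] {e : U → T} {t : A → T} (m : ∀ a, K a)

theorem continuous_wedgeMap [TopologicalSpace T] [TopologicalSpace U]
    [∀ a, TopologicalSpace (K a)] (he : Continuous e) : Continuous (wedgeMap e t m) :=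
  (he.prodMk continuous_const).sumElim <| continuous_sigma fun a =>
    show Continuous fun k : K a => (t a, update m a k) from
      continuous_const.prodMk (continuous_const.update a continuous_id)

theorem wedgeMap_injective (het : Injective (Sum.elim e t)) : Injective (wedgeMap e t m) := by
  obtain ⟨he, ht, hne⟩ := Sum.elim_injective.1 het
  rintro (u | ⟨a, k⟩) (u' | ⟨a', k'⟩) h <;> simp only [wedgeMap, Sum.elim_inl, Sum.elim_inr,
    Prod.mk.injEq] at h
  · rw [he h.1]
  · exact absurd h.1 (hne _ _)
  · exact absurd h.1.symm (hne _ _)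
  · obtain rfl : a = a' := ht h.1
    rw [update_injective m a h.2]

theorem isClosed_range_wedgeMap [TopologicalSpace T] [∀ a, TopologicalSpace (K a)] [T2Space T]
    [∀ a, CompactSpace (K a)] [∀ a, T2Space (K a)] (het : Surjective (Sum.elim e t)) :
    IsClosed (range (wedgeMap e t m)) := by
  refine closure_subset_iff_isClosed.1 fun p hp => ?_
  by_cases hpm : p.2 = m
  · obtain ⟨u | a, hs⟩ := het p.1
    · exact ⟨.inl u, Prod.ext hs hpm.symm⟩
    · exact ⟨.inr ⟨a, m a⟩, Prod.ext hs (by simp [wedgeMap, hpm])⟩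
  obtain ⟨a, ha⟩ := ne_iff.1 hpm
  let slice : K a → T × ∀ a, K a := fun k => (t a, update m a k)
  have hslice : IsClosed (range slice) :=
    (isCompact_range (continuous_const.prodMk (continuous_const.update a continuous_id))).isClosed
  have hO : IsOpen {q : T × ∀ a, K a | q.2 a ≠ m a} :=
    isOpen_ne_fun (continuous_apply a |>.comp continuous_snd) continuous_const
  have hsub : {q : T × ∀ a, K a | q.2 a ≠ m a} ∩ range (wedgeMap e t m) ⊆ range slice := by
    rintro q ⟨hq, u | ⟨b, k⟩, rfl⟩
    · exact absurd rfl hq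
    · obtain rfl : a = b := by
        by_contra hab
        exact hq (update_of_ne hab k m)
      exact ⟨k, rfl⟩
  obtain ⟨k, rfl⟩ := hslice.closure_subset_iff.2 hsub (hO.inter_closure ⟨ha, hp⟩)
  exact ⟨.inr ⟨a, k⟩, rfl⟩

end Wedge

theorem subcompact_sum_sigma_of_compactSpace {T U A : Type u} {K : A → Type u}
    [TopologicalSpace T] [CompactSpace T] [T2Space T] [TopologicalSpace U]
    [∀ a, TopologicalSpace (K a)] [∀ a, CompactSpace (K a)] [∀ a, T2Space (K a)]
    [∀ a, Nonempty (K a)] {e : U → T} {t : A → T} (he : Continuous e)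
    (het : Bijective (Sum.elim e t)) : Subcompact (U ⊕ Σ a, K a) := by
  classical
  let m : ∀ a, K a := fun a => Classical.arbitrary (K a)
  exact .of_isClosed_range (continuous_wedgeMap m he) (wedgeMap_injective m het.1)
    (isClosed_range_wedgeMap m het.2)

theorem Subcompact.sum_sigma {T U A : Type u} {D : A → Type u}
    [TopologicalSpace T] [CompactSpace T] [T2Space T] [TopologicalSpace U]
    [∀ a, TopologicalSpace (D a)] [∀ a, Nonempty (D a)] (hD : ∀ a, Subcompact (D a))
    {e : U → T} {t : A → T} (he : Continuous e) (het : Bijective (Sum.elim e t)) :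
    Subcompact (U ⊕ Σ a, D a) := by
  choose K _ _ _ g hg hgb using hD
  have (a : A) : Nonempty (K a) := ⟨g a (Classical.arbitrary _)⟩
  exact (subcompact_sum_sigma_of_compactSpace he het).of_continuous_bijective
    (continuous_id.sumMap (Continuous.sigma_map hg))
    (bijective_id.sumMap ⟨injective_id.sigma_map fun a => (hgb a).1,
      surjective_id.sigma_map fun a => (hgb a).2⟩)

theorem Subcompact.compl_of_sum_sigma {Z A : Type u} {X : A → Type u} [TopologicalSpace Z]
    [∀ a, TopologicalSpace (X a)] {S : Set (Z ⊕ Σ a, X a)}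
    (h : Subcompact (↥(Sum.inl ⁻¹' S)ᶜ ⊕ Σ a, ↥(Sum.inr ∘ Sigma.mk a ⁻¹' S)ᶜ)) :
    Subcompact ↥Sᶜ := by
  let restrict := Sum.map (Subtype.val : ↥(Sum.inl ⁻¹' S)ᶜ → Z)
    (Sigma.map id fun a (x : ↥(Sum.inr ∘ Sigma.mk a ⁻¹' S)ᶜ) => x.1)
  have hemb : IsEmbedding restrict :=
    IsEmbedding.subtypeVal.sumMap ((isEmbedding_sigmaMap injective_id).2 fun _ =>
      IsEmbedding.subtypeVal)
  have hrange : range restrict = Sᶜ := by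
    ext (z | ⟨a, x⟩)
    · simp [restrict]
    · simp only [restrict, mem_range, Sum.exists, Sum.map_inl, reduceCtorEq, exists_false,
        Sum.map_inr, Sum.inr.injEq, Sigma.exists, false_or]
      exact ⟨fun ⟨_, y, h⟩ => h ▸ y.2, fun hx => ⟨a, ⟨x, hx⟩, rfl⟩⟩
  let φ := hemb.toHomeomorph.trans (Homeomorph.setCongr hrange)
  exact h.of_continuous_bijective φ.symm.continuous φ.symm.bijective

theorem nonempty_equiv_sum_onePoint {Z A : Type u} {s : Set Z} (hA : ℵ₀ ≤ #A)
    (hs : #s ≤ #A) : Nonempty (A ≃ s ⊕ OnePoint A) := by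
  refine Cardinal.eq.1 ?_
  rw [mk_sum, lift_id, lift_id, OnePoint, mk_option, add_one_eq hA, add_eq_right hA hs]

theorem bijective_sumElim_inl_compl {Z A B : Type u} (s : Set Z) (σ : A ≃ s ⊕ B) :
    Bijective (Sum.elim (fun z : ↥sᶜ => (Sum.inl z.1 : Z ⊕ B))
      (Sum.map Subtype.val id ∘ σ)) := by
  refine ⟨Sum.elim_injective.2 ⟨?_, ?_, ?_⟩, ?_⟩
  · exact fun z z' h => Subtype.ext (Sum.inl_injective h)
  · exact (Sum.map_injective.2 ⟨Subtype.val_injective, injective_id⟩).comp σ.injective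
  · intro z a h
    rcases hσ : σ a with s' | b <;> simp only [comp_apply, hσ, Sum.map_inl, Sum.map_inr,
      Sum.inl.injEq, reduceCtorEq] at h
    exact z.2 (h ▸ s'.2)
  · rintro (z | b)
    · by_cases hz : z ∈ s
      · exact ⟨.inr (σ.symm (.inl ⟨z, hz⟩)), by simp⟩
      · exact ⟨.inl ⟨z, hz⟩, rfl⟩
    · exact ⟨.inr (σ.symm (.inr b)), by simp⟩

/-- if `X = Z ⊕ (⊕_{α ∈ A} X_α)` with `#A = τ`, each `X_α` an `a_τ`-space of
cardinality `> τ` and `Z` compact Hausdorff, then `X` is almost `a_τ`-subcompact. -/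
theorem stmt_5 (τ : Cardinal.{u}) (hτ : ℵ₀ ≤ τ)
    (A : Type u) (hA : #A = τ)
    (Z : Type u) [TopologicalSpace Z] [CompactSpace Z] [T2Space Z]
    (Xa : A → Type u) [∀ a, TopologicalSpace (Xa a)]
    (haspace : ∀ a, ATauSpace τ (Xa a)) (hbig : ∀ a, τ < #(Xa a)) :
    ∀ S : Set (Z ⊕ (Σ a, Xa a)), #S ≤ τ → Subcompact ↥(Sᶜ) := by
  intro S hS
  subst hA
  have hSZ : #(Sum.inl ⁻¹' S : Set Z) ≤ #A :=
    (mk_preimage_of_injective _ _ Sum.inl_injective).trans hS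
  have hSa (a : A) : #(Sum.inr ∘ Sigma.mk a ⁻¹' S : Set (Xa a)) ≤ #A :=
    (mk_preimage_of_injective _ _ (Sum.inr_injective.comp sigma_mk_injective)).trans hS
  have (a : A) : Nonempty ↥(Sum.inr ∘ Sigma.mk a ⁻¹' S)ᶜ :=
    (nonempty_compl.2 fun h => ((hSa a).trans_lt (hbig a)).ne (by rw [h, mk_univ])).to_subtype
  obtain ⟨σ⟩ := nonempty_equiv_sum_onePoint hτ hSZ
  let _ : TopologicalSpace A := ⊥
  have : DiscreteTopology A := ⟨rfl⟩
  exact .compl_of_sum_sigma <| .sum_sigma (fun a => (haspace a).2.2 _ (hSa a))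
    (continuous_inl.comp continuous_subtype_val) (bijective_sumElim_inl_compl _ σ)
end

section
/- Let τ be an infinite cardinal, let X = Z ⊕ (⊕{X_α : α ∈ A}) be the topological sum, where each X_α is a nonempty compact Hausdorff space, |A| = τ, and Z is a compact Hausdorff space, and let S ⊆ Z with |S| ≤ τ. Then the subspace X \ S is subcompact, i.e., admits a condensation onto a compact Hausdorff space. -/
open Cardinal Topology

universe u

/-!
Choose an injection `ι : Option S ↪ A` (possible since `τ` is infinite) and points `p a ∈ X_a`.
Map `X` to `Z ∪ {∞}` by the identity on `Z`, by sending the summand `X_{ι (some s)}` to `s`, and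
every other summand to `∞`. This continuous map `σ` is a bijection from `C \ S` onto `Z ∪ {∞}`,
where `C` is `Z` together with the points `p (ι o)`: the point `p (ι (some s))` takes the place of
the removed point `s`, and `p (ι none)` that of `∞`.

Now let `x ↦ [x]` collapse `C` to the point at infinity of the one-point compactification of
`X \ C`. The map `x ↦ (σ x, [x])` is injective on `X \ S` and has the same image there as on `X`.
That image is closed, hence compact, in `(Z ∪ {∞}) × (X \ C)⁺`: it contains `(Z ∪ {∞}) × {∞}`
because `σ` maps `C` onto `Z ∪ {∞}`, and off this slice it is the graph of `σ`.
-/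

open Set

theorem subcompact_of_injOn {X Y : Type u} [TopologicalSpace X] [TopologicalSpace Y]
    [T2Space Y] {F : X → Y} (hF : Continuous F) {s : Set X} (hinj : InjOn F s)
    (hs : IsCompact (F '' s)) : Subcompact s :=
  ⟨F '' s, inferInstance, isCompact_iff_compactSpace.1 hs, inferInstance,
    s.imageFactorization F, (hF.comp continuous_subtype_val).subtype_mk _,
    hinj.imageFactorization_injective, imageFactorization_surjective⟩

instance Sigma.weaklyLocallyCompactSpace {ι : Type*} {X : ι → Type*}
    [∀ i, TopologicalSpace (X i)] [∀ i, WeaklyLocallyCompactSpace (X i)] :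
    WeaklyLocallyCompactSpace (Σ i, X i) where
  exists_compact_mem_nhds := fun ⟨_, x⟩ =>
    let ⟨_, hs, hx⟩ := exists_compact_mem_nhds x
    ⟨_, hs.image continuous_sigmaMk, isOpenMap_sigmaMk.image_mem_nhds hx⟩

instance Sum.weaklyLocallyCompactSpace {X Y : Type*} [TopologicalSpace X] [TopologicalSpace Y]
    [WeaklyLocallyCompactSpace X] [WeaklyLocallyCompactSpace Y] :
    WeaklyLocallyCompactSpace (X ⊕ Y) where
  exists_compact_mem_nhds
    | .inl x =>
      let ⟨_, hs, hx⟩ := exists_compact_mem_nhds x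
      ⟨_, hs.image continuous_inl, isOpenMap_inl.image_mem_nhds hx⟩
    | .inr y =>
      let ⟨_, hs, hy⟩ := exists_compact_mem_nhds y
      ⟨_, hs.image continuous_inr, isOpenMap_inr.image_mem_nhds hy⟩

theorem isClosed_range_sigma_section {ι κ : Type*} {X : ι → Type*}
    [∀ i, TopologicalSpace (X i)] [∀ i, T1Space (X i)] (p : ∀ i, X i) (e : κ → ι) :
    IsClosed (range fun k => (⟨e k, p (e k)⟩ : Σ i, X i)) := by
  refine isClosed_sigma_iff.2 fun i => (subsingleton_singleton (a := p i)).anti ?_ |>.isClosed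
  rintro x ⟨k, hk⟩
  obtain ⟨rfl, hx⟩ := Sigma.mk.inj_iff.1 hk
  exact (eq_of_heq hx).symm

namespace OnePoint

variable {X : Type*} (C : Set X)

open scoped Classical in
noncomputable def collapse (x : X) : OnePoint ↥Cᶜ :=
  if h : x ∈ C then ∞ else ↑(⟨x, h⟩ : ↥Cᶜ)

variable {C}

theorem collapse_of_mem {x : X} (h : x ∈ C) : collapse C x = ∞ := dif_pos h

theorem collapse_of_notMem {x : X} (h : x ∉ C) : collapse C x = ↑(⟨x, h⟩ : ↥Cᶜ) := dif_neg h

theorem collapse_eq_coe_iff {x : X} {y : ↥Cᶜ} : collapse C x = ↑y ↔ x = y := by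
  by_cases h : x ∈ C
  · simp only [collapse_of_mem h, infty_ne_coe, false_iff]
    exact fun hxy => y.2 (hxy ▸ h)
  · rw [collapse_of_notMem h, coe_eq_coe, Subtype.ext_iff]

theorem continuous_collapse [TopologicalSpace X] [T2Space X] (hC : IsClosed C) :
    Continuous (collapse C) := by
  refine continuous_def.2 fun U hU => ?_
  by_cases h : ∞ ∈ U
  · have hK := ((isOpen_iff_of_mem h).1 hU).2
    have : (collapse C ⁻¹' U)ᶜ = Subtype.val '' (((↑) : ↥Cᶜ → OnePoint ↥Cᶜ) ⁻¹' U)ᶜ := by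
      ext x
      by_cases hx : x ∈ C <;> simp [collapse_of_mem, collapse_of_notMem, hx, h]
    rw [← isClosed_compl_iff, this]
    exact (hK.image continuous_subtype_val).isClosed
  · have : collapse C ⁻¹' U = Subtype.val '' (((↑) : ↥Cᶜ → OnePoint ↥Cᶜ) ⁻¹' U) := by
      ext x
      by_cases hx : x ∈ C <;> simp [collapse_of_mem, collapse_of_notMem, hx, h]
    rw [this]
    exact hC.isOpen_compl.isOpenMap_subtype_val _ ((isOpen_iff_of_notMem h).1 hU)

end OnePoint

open OnePoint in
theorem isClosed_range_prod_collapse {X Z : Type*} [TopologicalSpace X] [TopologicalSpace Z]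
    [T2Space Z] {C : Set X} {σ : X → Z} (hσ : Continuous σ) (hσC : SurjOn σ C univ) :
    IsClosed (range fun x => (σ x, collapse C x)) := by
  have hopen : IsOpen {q : Z × ↥Cᶜ | q.1 ≠ σ q.2} :=
    isOpen_ne_fun continuous_fst (hσ.comp (continuous_subtype_val.comp continuous_snd))
  suffices (range fun x => (σ x, collapse C x))ᶜ =
      Prod.map id (↑) '' {q : Z × ↥Cᶜ | q.1 ≠ σ q.2} by
    rw [← isOpen_compl_iff, this]
    exact (IsOpenEmbedding.id.prodMap isOpenEmbedding_coe).isOpenMap _ hopen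
  ext ⟨z, w⟩
  induction w using OnePoint.rec with
  | infty =>
    obtain ⟨c, hc, rfl⟩ := hσC (mem_univ z)
    simp only [mem_compl_iff, mem_range, not_exists, mem_image, Prod.map,
      Prod.mk.injEq, coe_ne_infty, and_false, exists_false, iff_false, not_forall, not_not]
    exact ⟨c, rfl, collapse_of_mem hc⟩
  | coe y =>
    simp only [mem_compl_iff, mem_range, Prod.mk.injEq, collapse_eq_coe_iff, mem_image,
      Prod.exists, Prod.map, id, coe_eq_coe, mem_ofPred_eq]
    constructor
    · exact fun h => ⟨z, y, fun hz => h ⟨y, hz.symm, rfl⟩, rfl, rfl⟩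
    · rintro ⟨z, y, hne, rfl, rfl⟩ ⟨x, hx, rfl⟩
      exact hne hx.symm

open OnePoint in
theorem subcompact_compl_of_bijOn {X Z : Type u} [TopologicalSpace X] [T2Space X]
    [WeaklyLocallyCompactSpace X] [TopologicalSpace Z] [CompactSpace Z] [T2Space Z]
    {C T : Set X} (hC : IsClosed C) (hTC : T ⊆ C) {σ : X → Z} (hσ : Continuous σ)
    (hbij : BijOn σ (C \ T) univ) : Subcompact ↥Tᶜ := by
  have := hC.isOpen_compl.locallyCompactSpace
  set F : X → Z × OnePoint ↥Cᶜ := fun x => (σ x, collapse C x)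
  have himage : F '' Tᶜ = range F := by
    refine (image_subset_range _ _).antisymm ?_
    rintro _ ⟨x, rfl⟩
    by_cases hx : x ∈ C
    · obtain ⟨c, hc, hcx⟩ := hbij.surjOn (mem_univ (σ x))
      exact ⟨c, hc.2, Prod.ext hcx ((collapse_of_mem hc.1).trans (collapse_of_mem hx).symm)⟩
    · exact ⟨x, fun hxT => hx (hTC hxT), rfl⟩
  have hinj : InjOn F Tᶜ := by
    intro x hxT y hyT hxy
    by_cases hx : x ∈ C
    · by_cases hy : y ∈ C
      · exact hbij.injOn ⟨hx, hxT⟩ ⟨hy, hyT⟩ (congrArg Prod.fst hxy)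
      · exact collapse_eq_coe_iff.1 ((congrArg Prod.snd hxy).trans (collapse_of_notMem hy))
    · exact (collapse_eq_coe_iff.1 ((congrArg Prod.snd hxy).symm.trans
        (collapse_of_notMem hx))).symm
  refine subcompact_of_injOn (hσ.prodMk (continuous_collapse hC)) hinj ?_
  rw [himage]
  exact (isClosed_range_prod_collapse hσ (hbij.surjOn.mono sdiff_subset subset_rfl)).isCompact

section Gluing

open OnePoint

variable {Z A : Type*} {Xa : A → Type*} {S : Set Z} (ι : Option S ↪ A)

noncomputable def attachPoint : A → OnePoint Z :=
  Function.extend ι (fun o => o.elim ∞ fun s => ((s : Z) : OnePoint Z)) fun _ => ∞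

noncomputable def collapseSummands : Z ⊕ (Σ a, Xa a) → OnePoint Z :=
  Sum.elim (↑) fun q => attachPoint ι q.1

def gluingSet (p : ∀ a, Xa a) : Set (Z ⊕ (Σ a, Xa a)) :=
  range Sum.inl ∪ range fun o => Sum.inr ⟨ι o, p (ι o)⟩

theorem collapseSummands_inl (z : Z) : collapseSummands (Xa := Xa) ι (.inl z) = z := rfl

theorem collapseSummands_inr (o : Option S) (x : Xa (ι o)) :
    collapseSummands ι (.inr ⟨ι o, x⟩) = o.elim ∞ fun s => ((s : Z) : OnePoint Z) :=
  ι.injective.extend_apply (fun o => o.elim ∞ fun s => ((s : Z) : OnePoint Z)) (fun _ => ∞) o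

theorem continuous_collapseSummands [TopologicalSpace Z] [∀ a, TopologicalSpace (Xa a)] :
    Continuous (collapseSummands (Xa := Xa) ι) :=
  continuous_coe.sumElim (continuous_sigma fun a => continuous_const (y := attachPoint ι a))

theorem isClosed_gluingSet [TopologicalSpace Z] [∀ a, TopologicalSpace (Xa a)]
    [∀ a, T1Space (Xa a)] (p : ∀ a, Xa a) : IsClosed (gluingSet ι p) := by
  refine isClosed_range_inl.union ?_
  rw [range_comp' Sum.inr]
  exact IsClosedEmbedding.inr.isClosedMap _ (isClosed_range_sigma_section p ι)

theorem bijOn_collapseSummands (p : ∀ a, Xa a) :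
    BijOn (collapseSummands ι) (gluingSet ι p \ Sum.inl '' S) univ := by
  refine ⟨mapsTo_univ _ _, ?_, ?_⟩
  · rintro _ ⟨⟨z, rfl⟩ | ⟨o, rfl⟩, hx⟩ _ ⟨⟨z', rfl⟩ | ⟨o', rfl⟩, hy⟩ h
      <;> simp only [collapseSummands_inl, collapseSummands_inr] at h
    · rw [coe_eq_coe.1 h]
    · cases o' with
      | none => exact (coe_ne_infty z h).elim
      | some s => exact (hx ⟨s, s.2, (coe_eq_coe.1 h).symm ▸ rfl⟩).elim
    · cases o with
      | none => exact (infty_ne_coe z' h).elim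
      | some s => exact (hy ⟨s, s.2, (coe_eq_coe.1 h) ▸ rfl⟩).elim
    · obtain rfl : o = o' := by cases o <;> cases o' <;> simp_all [Subtype.ext_iff]
      rfl
  · intro w _
    induction w using OnePoint.rec with
    | infty => exact ⟨_, ⟨.inr ⟨none, rfl⟩, by simp⟩, collapseSummands_inr ι none _⟩
    | coe z =>
      by_cases hz : z ∈ S
      · exact ⟨_, ⟨.inr ⟨Option.some ⟨z, hz⟩, rfl⟩, by simp⟩, collapseSummands_inr ι _ _⟩
      · exact ⟨_, ⟨.inl ⟨z, rfl⟩, by simpa using hz⟩, rfl⟩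

end Gluing

/-- if `X = Z ⊕ (⊕_{α ∈ A} X_α)` with each `X_α` a nonempty compact Hausdorff
space, `#A = τ`, `Z` compact Hausdorff and `S ⊆ Z` with `#S ≤ τ`, then `X \ S` is
subcompact. -/
theorem stmt_6 (τ : Cardinal.{u}) (hτ : ℵ₀ ≤ τ)
    (A : Type u) (hA : #A = τ)
    (Z : Type u) [TopologicalSpace Z] [CompactSpace Z] [T2Space Z]
    (Xa : A → Type u) [∀ a, TopologicalSpace (Xa a)] [∀ a, CompactSpace (Xa a)]
    [∀ a, T2Space (Xa a)] (hne : ∀ a, Nonempty (Xa a))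
    (S : Set Z) (hS : #S ≤ τ) :
    Subcompact ↥((Sum.inl '' S : Set (Z ⊕ (Σ a, Xa a)))ᶜ) := by
  obtain ⟨ι⟩ : Nonempty (Option S ↪ A) := by
    rw [← Cardinal.le_def, mk_option, hA, ← add_one_of_aleph0_le hτ]
    exact add_le_add_left hS 1
  let p a : Xa a := (hne a).some
  exact subcompact_compl_of_bijOn (isClosed_gluingSet ι p)
    ((image_subset_range _ _).trans subset_union_left) (continuous_collapseSummands ι)
    (bijOn_collapseSummands ι p)
end

section
/- Let {X_λ : λ ∈ Λ} be an infinite family of compact Hausdorff spaces, each with more than one point, and let p ∈ ∏{X_λ : λ ∈ Λ}. Then the σ-product X = {x ∈ ∏X_λ : x differs from p in only finitely many coordinates}, with the subspace topology of the product, is not subcompact, i.e., X admits no condensation onto a compact Hausdorff space. -/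
open Cardinal Topology

universe u

/-- an infinite `σ`-product of nontrivial compact Hausdorff spaces is not
subcompact. -/
theorem stmt_10 (Λ : Type u) [Infinite Λ]
    (Xl : Λ → Type u) [∀ l, TopologicalSpace (Xl l)] [∀ l, CompactSpace (Xl l)]
    [∀ l, T2Space (Xl l)] (hnt : ∀ l, Nontrivial (Xl l))
    (p : ∀ l, Xl l) :
    ¬ Subcompact ↥{x : ∀ l, Xl l | {l | x l ≠ p l}.Finite} := by
  rintro ⟨Y, tY, hcomp, ht2, f, hfc, hfb⟩
  classical
  letI := tY
  haveI := hcomp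
  haveI := ht2
  -- the "at most n coordinates differ from p" sets
  set C : ℕ → Set (∀ l, Xl l) := fun n => {x | {l | x l ≠ p l}.encard ≤ n} with hCdef
  have hCclosed : ∀ n, IsClosed (C n) := by
    intro n
    rw [← isOpen_compl_iff, isOpen_iff_mem_nhds]
    intro x hx
    have hx' : (n : ℕ∞) < {l | x l ≠ p l}.encard := by
      simpa [hCdef, not_le] using hx
    have h1 : ((n : ℕ∞) + 1) ≤ {l | x l ≠ p l}.encard :=
      Order.add_one_le_of_lt hx'
    obtain ⟨T, hTsub, hTcard⟩ := Set.exists_subset_encard_eq h1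
    have hTcard' : T.encard = ((n + 1 : ℕ) : ℕ∞) := by
      rw [hTcard]; push_cast; ring
    have hTfin : T.Finite := Set.finite_of_encard_eq_coe hTcard'
    set F := hTfin.toFinset with hFdef
    have hOopen : IsOpen {y : ∀ l, Xl l | ∀ i ∈ F, y i ≠ p i} := by
      have heq : {y : ∀ l, Xl l | ∀ i ∈ F, y i ≠ p i}
          = ⋂ i ∈ F, (fun y : ∀ l, Xl l => y i) ⁻¹' {p i}ᶜ := by
        ext y; simp
      rw [heq]
      exact isOpen_biInter_finset fun i _ =>
        (isOpen_compl_singleton).preimage (continuous_apply i)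
    have hxO : x ∈ {y : ∀ l, Xl l | ∀ i ∈ F, y i ≠ p i} := by
      intro i hi
      have hiT : i ∈ T := by simpa [hFdef] using hi
      exact hTsub hiT
    refine Filter.mem_of_superset (hOopen.mem_nhds hxO) ?_
    intro y hy
    have hTy : T ⊆ {l | y l ≠ p l} := by
      intro i hi
      exact hy i (by simpa [hFdef] using hi)
    have hge : ((n : ℕ∞) + 1) ≤ {l | y l ≠ p l}.encard := by
      rw [← hTcard]; exact Set.encard_mono hTy
    simp only [hCdef, Set.mem_compl_iff, Set.mem_setOf_eq, not_le]
    have hlt : (n : ℕ∞) < (n : ℕ∞) + 1 :=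
      ENat.lt_add_one_iff (by simp) |>.mpr le_rfl
    exact lt_of_lt_of_le hlt hge
  have hCcpt : ∀ n, IsCompact (C n) := fun n => (hCclosed n).isCompact
  have hCS : ∀ n, C n ⊆ {x : ∀ l, Xl l | {l | x l ≠ p l}.Finite} := by
    intro n x hx
    exact Set.encard_lt_top_iff.mp (lt_of_le_of_lt hx (WithTop.coe_lt_top n))
  -- S n as subsets of the sigma-product
  set S : ℕ → Set ↥{x : ∀ l, Xl l | {l | x l ≠ p l}.Finite} :=
    fun n => Subtype.val ⁻¹' C n with hSdef
  -- D n := f '' S n is compact and closed in Y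
  have hDcc : ∀ n, IsCompact (f '' S n) := by
    intro n
    haveI : CompactSpace ↥(C n) := isCompact_iff_compactSpace.mp (hCcpt n)
    have hcont : Continuous fun z : ↥(C n) => f ⟨z.1, hCS n z.2⟩ :=
      hfc.comp (Continuous.subtype_mk continuous_subtype_val _)
    have hrange : Set.range (fun z : ↥(C n) => f ⟨z.1, hCS n z.2⟩) = f '' S n := by
      ext y
      constructor
      · rintro ⟨z, rfl⟩
        exact ⟨⟨z.1, hCS n z.2⟩, z.2, rfl⟩
      · rintro ⟨x, hx, rfl⟩
        exact ⟨⟨x.1, hx⟩, rfl⟩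
    rw [← hrange]
    exact isCompact_range hcont
  have hDclosed : ∀ n, IsClosed (f '' S n) := fun n => (hDcc n).isClosed
  have hDcover : ⋃ n, f '' S n = Set.univ := by
    ext y
    simp only [Set.mem_iUnion, Set.mem_univ, iff_true]
    obtain ⟨x, rfl⟩ := hfb.2 y
    have hxfin : {l | x.1 l ≠ p l}.Finite := x.2
    refine ⟨hxfin.toFinset.card, x, ?_, rfl⟩
    show {l | x.1 l ≠ p l}.encard ≤ _
    rw [Set.Finite.encard_eq_coe_toFinset_card hxfin]
  haveI : Nonempty ↥{x : ∀ l, Xl l | {l | x l ≠ p l}.Finite} := ⟨⟨p, by simp⟩⟩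
  haveI : Nonempty Y := ⟨f (Classical.arbitrary _)⟩
  obtain ⟨N, hN⟩ := nonempty_interior_of_iUnion_of_closed hDclosed hDcover
  obtain ⟨y0, hy0⟩ := hN
  obtain ⟨x0, hx0⟩ := hfb.2 y0
  -- V is a nonempty open subset contained in S N
  set V : Set ↥{x : ∀ l, Xl l | {l | x l ≠ p l}.Finite} :=
    f ⁻¹' interior (f '' S N) with hVdef
  have hVopen : IsOpen V := isOpen_interior.preimage hfc
  have hx0V : x0 ∈ V := by
    show f x0 ∈ interior (f '' S N)
    rw [hx0]; exact hy0
  have hVS : V ⊆ S N := by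
    intro v hv
    have hmem : f v ∈ f '' S N := interior_subset hv
    obtain ⟨s, hs, hsv⟩ := hmem
    rwa [← hfb.1 hsv]
  -- extract a basic open neighbourhood in the product
  obtain ⟨W, hWopen, hWpre⟩ := isOpen_induced_iff.mp hVopen
  have hx0W : (x0 : ∀ l, Xl l) ∈ W := by
    have hmem : x0 ∈ Subtype.val ⁻¹' W := by rw [hWpre]; exact hx0V
    exact hmem
  obtain ⟨I, u, hu, hpi⟩ := isOpen_pi_iff.mp hWopen _ hx0W
  -- pick N+1 fresh coordinates
  have hbigfin : ((I : Set Λ) ∪ {l | x0.1 l ≠ p l}).Finite :=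
    I.finite_toSet.union x0.2
  have hinf : ((I : Set Λ) ∪ {l | x0.1 l ≠ p l})ᶜ.Infinite :=
    hbigfin.infinite_compl
  obtain ⟨J, hJsub, hJcard⟩ := hinf.exists_subset_card_eq (N + 1)
  -- choose points different from p
  have ha : ∀ l, ∃ b : Xl l, b ≠ p l := fun l => by
    haveI := hnt l; exact exists_ne (p l)
  set a : ∀ l, Xl l := fun l => (ha l).choose with hadef
  have haa : ∀ l, a l ≠ p l := fun l => (ha l).choose_spec
  -- the perturbed point
  set y : ∀ l, Xl l := fun l => if l ∈ J then a l else x0.1 l with hydef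
  have hysupp : {l | y l ≠ p l} ⊆ ↑J ∪ {l | x0.1 l ≠ p l} := by
    intro l hl
    by_cases hlJ : l ∈ J
    · exact Or.inl hlJ
    · right
      simpa [hydef, hlJ] using hl
  have hy : y ∈ {x : ∀ l, Xl l | {l | x l ≠ p l}.Finite} :=
    Set.Finite.subset (J.finite_toSet.union x0.2) hysupp
  have hJy : (J : Set Λ) ⊆ {l | y l ≠ p l} := by
    intro l hl
    have hyl : y l = a l := by
      simp only [hydef]
      split_ifs with h
      · rfl
      · exact absurd (by simpa using hl) h
    show y l ≠ p l
    rw [hyl]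
    exact haa l
  have hyW : y ∈ W := by
    apply hpi
    intro i hi
    have hiJ : i ∉ J := by
      intro hiJ
      exact hJsub hiJ (Or.inl hi)
    have hyi : y i = x0.1 i := by
      simp [hydef, hiJ]
    rw [hyi]
    exact (hu i hi).2
  have hyV : (⟨y, hy⟩ : ↥{x : ∀ l, Xl l | {l | x l ≠ p l}.Finite}) ∈ V := by
    rw [← hWpre]
    exact hyW
  have hyS := hVS hyV
  have hyS' : {l | y l ≠ p l}.encard ≤ (N : ℕ∞) := hyS
  have hcard : ((N : ℕ∞) + 1) ≤ (N : ℕ∞) := by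
    have h1 : ((J : Set Λ)).encard ≤ {l | y l ≠ p l}.encard :=
      Set.encard_mono hJy
    have h2 : ((J : Set Λ)).encard = ((N + 1 : ℕ) : ℕ∞) := by
      rw [Set.encard_coe_eq_coe_finsetCard, hJcard]
    calc ((N : ℕ∞) + 1) = ((N + 1 : ℕ) : ℕ∞) := by push_cast; ring
    _ = ((J : Set Λ)).encard := h2.symm
    _ ≤ {l | y l ≠ p l}.encard := h1
    _ ≤ (N : ℕ∞) := hyS'
  have hlt : ((N : ℕ∞)) < (N : ℕ∞) + 1 :=
    ENat.lt_add_one_iff (by simp) |>.mpr le_rfl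
  exact absurd (lt_of_lt_of_le hlt hcard) (lt_irrefl _)
end

section
/- Let τ be an infinite cardinal and let {X_α : α ∈ Λ} be a family of nonempty Hausdorff spaces with i-weight iw(X_α) ≤ τ for each α ∈ Λ and |Λ| = 2^τ. Then for every subset S of the topological sum X = ⊕{X_α : α ∈ Λ} with |S| < 2^τ, the subspace X \ S admits a condensation onto the Tychonoff cube [0,1]^τ; in particular X is a_{<2^τ}-subcompact. -/
open Cardinal Topology

universe u

/-!
Each summand condenses onto a Tychonoff space of weight `≤ τ`, which injects continuously into
the cube `I^τ`; removing `S` leaves `2^τ` nonempty pieces `E_a ⊆ I^τ`. It remains to map the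
pieces by continuous injections onto pairwise disjoint sets covering a copy
`M = I^(τ × 2) × I^(τ × 2 × D)` of `I^τ`, where `D` indexes Hausdorff's independent family of
`2^τ` subsets of `D`. This is a transfinite recursion of length `2^τ`: the `a`-th piece is
placed through the `a`-th point of `M` unless that point is already covered.
A placement is `y ↦ (c y, w (c y))`, where `c` is a coordinatewise injection taking a chosen
point of the piece to a prescribed `x₀`, and `w` is a "wedge" map with prescribed value at
`x₀`, departing from it in the coordinate `(γ, δ)` at rate `|x γ - x₀ γ| * u δ`. Where a new
wedge meets one of the fewer than `2^τ` earlier ones, the slope `u` lies in a plane determined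
by the earlier wedge and `γ`. The indicators of the independent family are linearly
independent, so each plane contains at most two of them, and some indicator is a slope whose
wedge meets no earlier wedge outside `x₀`.
-/

open Set Function unitInterval TopologicalSpace

theorem exists_notMem_of_mk_lt {α : Type u} {s : Set α} (h : #s < #α) : ∃ a, a ∉ s := by
  by_contra! hs
  rw [eq_univ_of_forall hs, mk_univ] at h
  exact h.false

theorem mk_pi_unitInterval (A : Type u) [Infinite A] : #(A → I) = 2 ^ #A := by
  rw [mk_arrow, mk_Icc_real zero_lt_one, lift_continuum, lift_uzero, ← two_power_aleph0,
    ← power_mul, aleph0_mul_eq (aleph0_le_mk A)]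

theorem mk_setOf_mem_span_pair_le {K : Type*} {V ι : Type u} [DivisionRing K] [AddCommGroup V]
    [Module K V] {v : ι → V} (hv : LinearIndependent K v) (a b : V) :
    #{i | v i ∈ Submodule.span K {a, b}} ≤ 2 := by
  set W := Submodule.span K {a, b}
  have hW : LinearIndependent K fun i : {i | v i ∈ W} => (⟨v i, i.2⟩ : W) :=
    LinearIndependent.of_comp W.subtype (hv.comp _ Subtype.val_injective)
  calc #{i | v i ∈ W} ≤ Module.rank K W := hW.cardinal_le_rank
    _ ≤ #({a, b} : Set V) := rank_span_le _
    _ ≤ #({b} : Set V) + 1 := mk_insert_le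
    _ ≤ 2 := by rw [mk_singleton]; norm_num

theorem WellFounded.exists_fix_spec {α β : Sort*} {r : α → α → Prop} (hr : WellFounded r)
    (spec : ∀ a, (∀ b, r b a → β) → β → Prop) (h : ∀ a f, ∃ y, spec a f y) :
    ∃ g : α → β, ∀ a, spec a (fun b _ => g b) (g a) :=
  ⟨hr.fix fun a f => (h a f).choose, fun a => hr.fix_eq _ a ▸ (h a _).choose_spec⟩

/-- Transfinite exhaustion: place the pieces one by one along an initial well-order of `ι`,
the `i`-th one through the `i`-th point of `M` unless an earlier piece already covers it. -/
theorem exists_pairwise_disjoint_iUnion_eq_univ {ι M P : Type u} (hι : #ι = #M)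
    (img : ι → P → Set M)
    (hext : ∀ s : Set (ι × P), #s < #M → ∀ i z, ∃ p,
      (∀ q ∈ s, Disjoint (img i p) (img q.1 q.2)) ∧ (z ∉ ⋃ q ∈ s, img q.1 q.2 → z ∈ img i p)) :
    ∃ p : ι → P, Pairwise (Disjoint on fun i => img i (p i)) ∧ ⋃ i, img i (p i) = Set.univ := by
  obtain ⟨_, _, hord⟩ := exists_ord_eq_type_lt ι
  obtain ⟨enum⟩ := Cardinal.eq.1 hι
  let prior (i : ι) (f : ∀ j, j < i → P) : Set (ι × P) := range fun j : Iio i => (j.1, f j j.2)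
  obtain ⟨p, hp⟩ := wellFounded_lt.exists_fix_spec
    (fun i f y => (∀ q ∈ prior i f, Disjoint (img i y) (img q.1 q.2)) ∧
      (enum i ∉ ⋃ q ∈ prior i f, img q.1 q.2 → enum i ∈ img i y))
    fun i f => hext _ (mk_range_le.trans_lt (hι ▸ mk_Iio_lt i hord)) i (enum i)
  have hprior {i j : ι} (h : j < i) : (j, p j) ∈ prior i fun j _ => p j := ⟨⟨j, h⟩, rfl⟩
  refine ⟨p, fun i j hij => ?_, eq_univ_of_forall fun z => ?_⟩
  · rcases hij.lt_or_gt with h | h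
    · exact ((hp j).1 _ (hprior h)).symm
    · exact (hp i).1 _ (hprior h)
  · obtain ⟨i, rfl⟩ := enum.surjective z
    by_cases hz : enum i ∈ ⋃ q ∈ prior i fun j _ => p j, img q.1 q.2
    · obtain ⟨_, ⟨⟨j, _⟩, rfl⟩, hj⟩ := mem_iUnion₂.1 hz
      exact mem_iUnion.2 ⟨j, hj⟩
    · exact mem_iUnion.2 ⟨i, (hp i).2 hz⟩

theorem bijective_sigma_restrict {ι Y : Type*} {X : ι → Type*} (R : Set (Σ i, X i))
    (F : ∀ i, X i → Y) (hinj : ∀ i, Injective (F i))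
    (hdisj : Pairwise (Disjoint on fun i => F i '' {x | ⟨i, x⟩ ∈ R}))
    (hcover : ⋃ i, F i '' {x | ⟨i, x⟩ ∈ R} = Set.univ) :
    Bijective fun q : R => F q.1.1 q.1.2 := by
  refine ⟨fun ⟨⟨i, x⟩, hx⟩ ⟨⟨j, y⟩, hy⟩ h => ?_, fun z => ?_⟩
  · change F i x = F j y at h
    obtain rfl | hij := eq_or_ne i j
    · obtain rfl := hinj i h
      rfl
    · exact absurd h ((hdisj hij).ne_of_mem ⟨x, hx, rfl⟩ ⟨y, hy, rfl⟩)
  · obtain ⟨i, x, hx, rfl⟩ := mem_iUnion.1 (hcover ▸ mem_univ z)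
    exact ⟨⟨⟨i, x⟩, hx⟩, rfl⟩

theorem mk_setOf_exists_sigma_notMem {ι : Type u} {X : ι → Type u} [Infinite ι]
    (hne : ∀ i, Nonempty (X i)) (S : Set (Σ i, X i)) (hS : #S < #ι) :
    #{i | ∃ x, ⟨i, x⟩ ∉ S} = #ι := by
  have hfull : #{i | ∀ x, ⟨i, x⟩ ∈ S} ≤ #S :=
    mk_le_of_injective (f := fun i => ⟨⟨i.1, (hne i.1).some⟩, i.2 _⟩)
      fun i j h => Subtype.ext (congrArg (fun q : S => q.1.1) h)
  have := mk_compl_of_infinite _ (hfull.trans_lt hS)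
  simpa only [compl_ofPred, not_forall] using this

theorem TopologicalSpace.IsTopologicalBasis.exists_continuousMap_separating {Y : Type*}
    [TopologicalSpace Y] [T35Space Y]
    {B : Set (Set Y)} (hB : IsTopologicalBasis B) :
    ∃ φ : B × B → C(Y, I), ∀ x y, x ≠ y → ∃ q, φ q x ≠ φ q y := by
  -- for each pair of basic sets, a function separating them if there is one
  have hφ (q : B × B) : ∃ φ : C(Y, I), (∃ ψ : C(Y, I), Disjoint (ψ '' q.1) (ψ '' q.2)) →
      Disjoint (φ '' q.1) (φ '' q.2) := by
    by_cases h : ∃ ψ : C(Y, I), Disjoint (ψ '' q.1) (ψ '' q.2)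
    · exact ⟨h.choose, fun _ => h.choose_spec⟩
    · exact ⟨ContinuousMap.const _ 0, fun h' => absurd h' h⟩
  choose φ hφ using hφ
  refine ⟨φ, fun x y hxy => ?_⟩
  obtain ⟨f, hf, hfx, hfy⟩ := CompletelyRegularSpace.completely_regular x {y} isClosed_singleton
    (by simpa using hxy)
  obtain ⟨U, hU, hxU, hUf⟩ := hB.exists_subset_of_mem_open
    (show x ∈ {z | (f z : ℝ) < 1 / 2} by simp [hfx]) (isOpen_lt (by fun_prop) continuous_const)
  obtain ⟨V, hV, hyV, hVf⟩ := hB.exists_subset_of_mem_open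
    (show y ∈ {z | 1 / 2 < (f z : ℝ)} by norm_num [hfy rfl])
    (isOpen_lt continuous_const (by fun_prop))
  let ψ : C(Y, I) := ⟨f, hf⟩
  have hsep : Disjoint (ψ '' U) (ψ '' V) := by
    rw [disjoint_left]
    rintro _ ⟨a, ha, rfl⟩ ⟨b, hb, hab⟩
    have h₁ : (f a : ℝ) < 1 / 2 := hUf ha
    have h₂ : 1 / 2 < (f b : ℝ) := hVf hb
    have : (f b : ℝ) = f a := congrArg Subtype.val hab
    linarith
  exact ⟨(⟨U, hU⟩, ⟨V, hV⟩),
    (hφ _ ⟨ψ, hsep⟩).ne_of_mem (mem_image_of_mem _ hxU) (mem_image_of_mem _ hyV)⟩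

theorem exists_continuous_injective_pi_of_separating {Y : Type*} {K T : Type u}
    [TopologicalSpace Y] [Nonempty K] (hK : #K ≤ #T) (φ : K → C(Y, I))
    (hφ : ∀ x y, x ≠ y → ∃ k, φ k x ≠ φ k y) :
    ∃ j : Y → (T → I), Continuous j ∧ Injective j := by
  obtain ⟨ι⟩ := hK
  refine ⟨fun y t => φ (invFun ι t) y, continuous_pi fun t => (φ _).continuous,
    fun x y h => by_contra fun hxy => ?_⟩
  obtain ⟨k, hk⟩ := hφ x y hxy
  obtain ⟨t, rfl⟩ := invFun_surjective ι.injective k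
  exact hk (congrFun h t)

theorem exists_continuous_injective_pi {Y T : Type u} [TopologicalSpace Y] [T35Space Y]
    [Infinite T] {B : Set (Set Y)} (hB : IsTopologicalBasis B) (hBT : #B ≤ #T) :
    ∃ j : Y → (T → I), Continuous j ∧ Injective j := by
  rcases isEmpty_or_nonempty Y with hY | hY
  · exact ⟨isEmptyElim, continuous_of_discreteTopology, injective_of_subsingleton _⟩
  have : Nonempty B := by
    obtain ⟨U, hU, -⟩ := hB.exists_subset_of_mem_open (mem_univ hY.some) isOpen_univ
    exact ⟨⟨U, hU⟩⟩
  obtain ⟨φ, hφ⟩ := hB.exists_continuousMap_separating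
  refine exists_continuous_injective_pi_of_separating ?_ φ hφ
  calc #(B × B) = #B * #B := by rw [mk_prod, lift_id]
    _ ≤ #T * #T := mul_le_mul' hBT hBT
    _ = #T := mul_eq_self (aleph0_le_mk T)

namespace SumCondensation

noncomputable def farEnd (c : I) : I := if (c : ℝ) ≤ 1 / 2 then 1 else 0

theorem coe_farEnd_ne (c : I) : (farEnd c : ℝ) ≠ c := by
  unfold farEnd
  split_ifs with h
  · simp only [Set.Icc.coe_one]; linarith
  · simp only [Set.Icc.coe_zero]; linarith [c.2.1]

noncomputable def push (c : I) : I → I := Set.Icc.convexComb c (farEnd c)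

theorem coe_push (c s : I) : (push c s : ℝ) = c + s * (farEnd c - c) := by
  simp only [push, Set.Icc.coe_convexComb]; ring

@[simp] theorem push_zero (c : I) : push c 0 = c := Set.Icc.convexComb_zero _ _

theorem push_injective (c : I) : Injective (push c) := by
  intro s s' h
  have h' := congrArg Subtype.val h
  rw [coe_push, coe_push] at h'
  exact Subtype.ext (mul_right_cancel₀ (sub_ne_zero.2 (coe_farEnd_ne c)) (by linarith))

theorem continuous_push (c : I) : Continuous (push c) := Set.Icc.continuous_convexComb _ _

def absDiff (a b : I) : I :=
  ⟨|(a : ℝ) - b|, abs_nonneg _,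
    abs_sub_le_iff.2 ⟨by linarith [a.2.2, b.2.1], by linarith [a.2.1, b.2.2]⟩⟩

def posDiff (a b : I) : I :=
  ⟨max ((a : ℝ) - b) 0, le_max_right _ _, max_le (by linarith [a.2.2, b.2.1]) zero_le_one⟩

@[simp] theorem absDiff_self (a : I) : absDiff a a = 0 := by ext; simp [absDiff]

@[simp] theorem posDiff_self (a : I) : posDiff a a = 0 := by ext; simp [posDiff]

theorem coe_absDiff_ne_zero {a b : I} (h : a ≠ b) : (absDiff a b : ℝ) ≠ 0 :=
  abs_ne_zero.2 (sub_ne_zero.2 (Subtype.coe_ne_coe.2 h))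

theorem continuous_absDiff_left (b : I) : Continuous fun a => absDiff a b := by
  unfold absDiff; fun_prop

theorem continuous_posDiff_left (b : I) : Continuous fun a => posDiff a b := by
  unfold posDiff; fun_prop

/-- `x = 2 max x 0 - |x|` recovers the difference from its absolute value and positive part. -/
theorem eq_of_absDiff_eq_of_posDiff_eq {a a' b : I} (habs : absDiff a b = absDiff a' b)
    (hpos : posDiff a b = posDiff a' b) : a = a' := by
  have key : ∀ x : ℝ, x = 2 * max x 0 - |x| := fun x => by
    rcases le_total x 0 with h | h
    · rw [max_eq_right h, abs_of_nonpos h]; ring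
    · rw [max_eq_left h, abs_of_nonneg h]; ring
  have h1 := congrArg Subtype.val habs
  have h2 := congrArg Subtype.val hpos
  simp only [absDiff, posDiff] at h1 h2
  ext
  linarith [key ((a : ℝ) - b), key ((a' : ℝ) - b)]

section Placement

abbrev IndepIx (T : Type u) : Type u := Finset T × Finset (Finset T)

abbrev Cols (T : Type u) : Type u := T × Bool → I

abbrev Heights (T : Type u) : Type u := (T × Bool) × IndepIx T → I

abbrev Master (T : Type u) : Type u := Cols T × Heights T

structure Datum (T : Type u) where
  col : Cols T
  height : Heights T
  slope : IndepIx T → I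

variable {T : Type u}

noncomputable def colMap (e : T → I) (x₀ : Cols T) (y : T → I) : Cols T
  | (t, false) => push (x₀ (t, false)) (absDiff (y t) (e t))
  | (t, true) => push (x₀ (t, true)) (posDiff (y t) (e t))

@[simp] theorem colMap_self (e : T → I) (x₀ : Cols T) : colMap e x₀ e = x₀ := by
  ext ⟨t, b⟩; cases b <;> simp [colMap]

theorem colMap_injective (e : T → I) (x₀ : Cols T) : Injective (colMap e x₀) := by
  intro y y' h
  funext t
  exact eq_of_absDiff_eq_of_posDiff_eq (push_injective _ (congrFun h (t, false)))
    (push_injective _ (congrFun h (t, true)))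

theorem continuous_colMap (e : T → I) (x₀ : Cols T) : Continuous (colMap e x₀) := by
  refine continuous_pi fun ⟨t, b⟩ => ?_
  cases b
  · exact (continuous_push _).comp ((continuous_absDiff_left _).comp (continuous_apply t))
  · exact (continuous_push _).comp ((continuous_posDiff_left _).comp (continuous_apply t))

namespace Datum

def target (d : Datum T) : Master T := (d.col, d.height)

noncomputable def wedge (d : Datum T) (x : Cols T) : Heights T := fun h =>
  push (d.height h) (absDiff (x h.1) (d.col h.1) * d.slope h.2)

noncomputable def place (d : Datum T) (e : T → I) (y : T → I) : Master T :=
  (colMap e d.col y, d.wedge (colMap e d.col y))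

@[simp] theorem wedge_col (d : Datum T) : d.wedge d.col = d.height := by
  ext h; simp [wedge]

theorem continuous_wedge (d : Datum T) : Continuous d.wedge :=
  continuous_pi fun h => (continuous_push _).comp
    (((continuous_absDiff_left _).comp (continuous_apply h.1)).mul continuous_const)

theorem place_self (d : Datum T) (e : T → I) : d.place e e = d.target := by
  simp [place, target]

theorem continuous_place (d : Datum T) (e : T → I) : Continuous (d.place e) :=
  (continuous_colMap e d.col).prodMk (d.continuous_wedge.comp (continuous_colMap e d.col))

theorem place_injective (d : Datum T) (e : T → I) : Injective (d.place e) :=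
  fun _ _ h => colMap_injective e d.col (congrArg Prod.fst h)

/-- Solve the `(γ, δ)`-coordinate of the equation for `u δ`, dividing by `|x γ - x₀ γ| ≠ 0`. -/
theorem exists_mem_span_pair_of_wedge_eq (v₀ : Heights T) (d' : Datum T) (γ : T × Bool) :
    ∃ A B : IndepIx T → ℝ, ∀ (x₀ x : Cols T) (u : IndepIx T → I), x γ ≠ x₀ γ →
      (Datum.mk x₀ v₀ u).wedge x = d'.wedge x →
      (fun δ => (u δ : ℝ)) ∈ Submodule.span ℝ {A, B} := by
  refine ⟨fun δ => (d'.height (γ, δ) - v₀ (γ, δ)) / (farEnd (v₀ (γ, δ)) - v₀ (γ, δ)),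
    fun δ => d'.slope δ * (farEnd (d'.height (γ, δ)) - d'.height (γ, δ)) /
      (farEnd (v₀ (γ, δ)) - v₀ (γ, δ)), fun x₀ x u hx heq => ?_⟩
  have ha := coe_absDiff_ne_zero hx
  refine Submodule.mem_span_pair.2 ⟨1 / absDiff (x γ) (x₀ γ),
    absDiff (x γ) (d'.col γ) / absDiff (x γ) (x₀ γ), funext fun δ => ?_⟩
  have hδ := congrArg Subtype.val (congrFun heq (γ, δ))
  simp only [wedge, coe_push, Set.Icc.coe_mul] at hδ
  have hf := sub_ne_zero.2 (coe_farEnd_ne (v₀ (γ, δ)))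
  simp only [Pi.add_apply, Pi.smul_apply, smul_eq_mul]
  field_simp
  linarith

end Datum

end Placement

section IndepFamily

variable (T : Type u)

open Classical in
/-- Hausdorff's independent family: `X ↦ {(F, 𝒜) | F ∩ X ∈ 𝒜}`. -/
def indepFamily (X : Set T) : Set (IndepIx T) := {d | {t ∈ d.1 | t ∈ X} ∈ d.2}

/-- To isolate `X` from finitely many other sets `Y`, evaluate at `(F, {F ∩ X})` where `F`
contains a point of each `X ∆ Y`. -/
theorem linearIndependent_indicator_indepFamily :
    LinearIndependent ℝ fun X : Set T => (indepFamily T X).indicator (1 : IndepIx T → ℝ) := by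
  classical
  refine linearIndependent_iff'.2 fun s g hg X hX => ?_
  have hsep : ∀ Y ∈ s.erase X, ∃ t, ¬(t ∈ Y ↔ t ∈ X) := fun Y hY => by
    by_contra! h
    exact (Finset.ne_of_mem_erase hY) (Set.ext h)
  choose w hw using hsep
  set F : Finset T := (s.erase X).attach.image fun Y => w Y.1 Y.2
  have hd : ∀ Y ∈ s, (F, {F.filter (· ∈ X)}) ∈ indepFamily T Y ↔ Y = X := by
    intro Y hY
    simp only [indepFamily, mem_ofPred_eq, Finset.mem_singleton]
    refine ⟨fun h => by_contra fun hYX => ?_, fun h => h ▸ rfl⟩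
    have hYe : Y ∈ s.erase X := Finset.mem_erase.2 ⟨hYX, hY⟩
    have hwF : w Y hYe ∈ F := Finset.mem_image.2 ⟨⟨Y, hYe⟩, Finset.mem_attach _ _, rfl⟩
    have := congrArg (w Y hYe ∈ ·) h
    simp only [Finset.mem_filter, hwF, true_and, eq_iff_iff] at this
    exact hw Y hYe this
  have := congrFun hg (F, {F.filter (· ∈ X)})
  rw [Finset.sum_apply, Finset.sum_eq_single X (fun Y hY hYX => by
    simp [Set.indicator_of_notMem (mt (hd Y hY).1 hYX)]) (fun h => absurd hX h)] at this
  simpa [Set.indicator_of_mem ((hd X hX).2 rfl)] using this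

end IndepFamily

section Cardinality

variable (T : Type u) [Infinite T]

theorem mk_prod_bool : #(T × Bool) = #T := by
  rw [mk_prod, lift_uzero, mk_bool, lift_ofNat]
  exact Cardinal.mul_eq_left (aleph0_le_mk T) (ofNat_lt_aleph0.le.trans (aleph0_le_mk T))
    two_ne_zero

theorem mk_indepIx : #(IndepIx T) = #T := by
  rw [mk_prod, lift_id, lift_id, mk_finset_of_infinite, mk_finset_of_infinite,
    mk_finset_of_infinite, mul_eq_self (aleph0_le_mk T)]

theorem mk_heightIx : #((T × Bool) × IndepIx T) = #T := by
  rw [mk_prod, lift_id, lift_id, mk_prod_bool, mk_indepIx, mul_eq_self (aleph0_le_mk T)]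

theorem mk_heights : #(Heights T) = 2 ^ #T := by
  rw [mk_pi_unitInterval, mk_heightIx]

theorem nonempty_master_homeomorph : Nonempty (Master T ≃ₜ (T → I)) := by
  have : #((T × Bool) ⊕ (T × Bool) × IndepIx T) = #T := by
    rw [mk_sum, lift_id, lift_id, mk_prod_bool, mk_heightIx, add_eq_self (aleph0_le_mk T)]
  obtain ⟨e⟩ := Cardinal.eq.1 this
  exact ⟨Homeomorph.sumArrowHomeomorphProdArrow.symm.trans
    (Homeomorph.piCongrLeft (Y := fun _ => I) e)⟩

theorem mk_master : #(Master T) = 2 ^ #T := by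
  obtain ⟨h⟩ := nonempty_master_homeomorph T
  rw [mk_congr h.toEquiv, mk_pi_unitInterval]

end Cardinality

section Extension

variable {T : Type u} [Infinite T]

theorem exists_slope_wedge_ne (x₀ : Cols T) (v₀ : Heights T) {J : Type u} (hJ : #J < 2 ^ #T)
    (d' : J → Datum T) :
    ∃ u : IndepIx T → I, ∀ j x, x ≠ x₀ → (Datum.mk x₀ v₀ u).wedge x ≠ (d' j).wedge x := by
  choose A B hAB using fun p : J × (T × Bool) =>
    Datum.exists_mem_span_pair_of_wedge_eq v₀ (d' p.1) p.2
  let bad (p : J × (T × Bool)) : Set (Set T) :=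
    {X | (indepFamily T X).indicator (1 : IndepIx T → ℝ) ∈ Submodule.span ℝ {A p, B p}}
  have hinf : ℵ₀ ≤ 2 ^ #T := (aleph0_le_mk T).trans (cantor _).le
  have hbad : #(⋃ p, bad p) < #(Set T) := by
    have hp (p) : #(bad p) ≤ 2 :=
      mk_setOf_mem_span_pair_le (linearIndependent_indicator_indepFamily T) _ _
    have hJT : #(J × (T × Bool)) < 2 ^ #T := by
      rw [mk_prod, lift_id, lift_id, mk_prod_bool]
      exact mul_lt_of_lt hinf hJ (cantor _)
    calc #(⋃ p, bad p) ≤ #(J × (T × Bool)) * 2 :=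
          (mk_iUnion_le _).trans (by gcongr; exact ciSup_le' hp)
      _ < 2 ^ #T := mul_lt_of_lt hinf hJT (ofNat_lt_aleph0.trans_le hinf)
      _ = #(Set T) := mk_set.symm
  obtain ⟨X, hX⟩ := exists_notMem_of_mk_lt hbad
  have hcoe : (fun δ => (((indepFamily T X).indicator 1 δ : I) : ℝ)) =
      (indepFamily T X).indicator 1 := by
    ext δ; by_cases h : δ ∈ indepFamily T X <;> simp [h]
  refine ⟨(indepFamily T X).indicator 1, fun j x hx heq => hX ?_⟩
  obtain ⟨γ, hγ⟩ := Function.ne_iff.1 hx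
  refine mem_iUnion.2 ⟨(j, γ), ?_⟩
  simpa only [bad, mem_ofPred_eq, hcoe] using hAB (j, γ) x₀ x _ hγ heq

theorem exists_datum_disjoint {J : Type u} (hJ : #J < 2 ^ #T) (d' : J → Datum T)
    (s : J → Set (Master T)) (hs : ∀ j, ∀ w ∈ s j, w.2 = (d' j).wedge w.1) (z : Master T) :
    ∃ d : Datum T, (∀ e j, Disjoint (range (d.place e)) (s j)) ∧
      (z ∉ ⋃ j, s j → d.target = z) := by
  obtain ⟨z', hz's, hz'z⟩ : ∃ z', z' ∉ ⋃ j, s j ∧ (z ∉ ⋃ j, s j → z' = z) := by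
    by_cases hz : z ∈ ⋃ j, s j
    · obtain ⟨v, hv⟩ := exists_notMem_of_mk_lt
        (mk_range_le.trans_lt (hJ.trans_eq (mk_heights T).symm) :
          #(range fun j => (d' j).wedge 0) < _)
      refine ⟨(0, v), fun h => ?_, fun h => absurd hz h⟩
      obtain ⟨j, hj⟩ := mem_iUnion.1 h
      exact hv ⟨j, (hs j _ hj).symm⟩
    · exact ⟨z, hz, fun _ => rfl⟩
  obtain ⟨u, hu⟩ := exists_slope_wedge_ne z'.1 z'.2 hJ d'
  refine ⟨⟨z'.1, z'.2, u⟩, fun e j => disjoint_left.2 ?_, hz'z⟩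
  rintro _ ⟨y, rfl⟩ hy
  by_cases hcol : colMap e z'.1 y = z'.1
  · have hye : y = e := colMap_injective e z'.1 (hcol.trans (colMap_self e z'.1).symm)
    rw [hye, Datum.place_self] at hy
    exact hz's (mem_iUnion.2 ⟨j, hy⟩)
  · exact hu j _ hcol (hs j _ hy)

theorem exists_master_placements {ι : Type u} (hι : #ι = 2 ^ #T) (E : ι → Set (T → I))
    (hE : ∀ i, (E i).Nonempty) :
    ∃ Φ : ι → (T → I) → Master T, (∀ i, Continuous (Φ i)) ∧ (∀ i, Injective (Φ i)) ∧
      Pairwise (Disjoint on fun i => Φ i '' E i) ∧ ⋃ i, Φ i '' E i = Set.univ := by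
  choose e he using hE
  obtain ⟨d, hdisj, hcover⟩ := exists_pairwise_disjoint_iUnion_eq_univ
    (hι.trans (mk_master T).symm) (fun i (d : Datum T) => d.place (e i) '' E i)
    fun s hs i z => by
      obtain ⟨d, hd, hdz⟩ := exists_datum_disjoint (J := s) (hs.trans_eq (mk_master T))
        (fun q => q.1.2) (fun q => q.1.2.place (e q.1.1) '' E q.1.1)
        (by rintro q _ ⟨y, -, rfl⟩; rfl) z
      refine ⟨d, fun q hq => (hd (e i) ⟨q, hq⟩).mono_left (image_subset_range _ _),
        fun hz => ⟨e i, he i, (d.place_self _).trans (hdz ?_)⟩⟩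
      rwa [biUnion_eq_iUnion] at hz
  exact ⟨fun i => (d i).place (e i), fun i => (d i).continuous_place _,
    fun i => (d i).place_injective _, hdisj, hcover⟩

end Extension

end SumCondensation

open SumCondensation in
theorem exists_cube_placements {T ι : Type u} [Infinite T] (E : ι → Set (T → I))
    (hE : #{i | (E i).Nonempty} = 2 ^ #T) :
    ∃ Φ : ι → (T → I) → (T → I), (∀ i, Continuous (Φ i)) ∧ (∀ i, Injective (Φ i)) ∧
      Pairwise (Disjoint on fun i => Φ i '' E i) ∧ ⋃ i, Φ i '' E i = Set.univ := by
  classical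
  obtain ⟨h⟩ := nonempty_master_homeomorph T
  obtain ⟨Φ, hc, hi, hdisj, hcover⟩ := exists_master_placements hE (fun i => E i.1) fun i => i.2
  refine ⟨fun i => if hi : (E i).Nonempty then h ∘ Φ ⟨i, hi⟩ else id,
    fun i => ?_, fun i => ?_, fun i j hij => ?_, eq_univ_of_forall fun z => ?_⟩
  · dsimp only
    split_ifs
    exacts [h.continuous.comp (hc _), continuous_id]
  · dsimp only
    split_ifs
    exacts [h.injective.comp (hi _), injective_id]
  · by_cases hEi : (E i).Nonempty
    · by_cases hEj : (E j).Nonempty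
      · simpa only [Function.onFun, dif_pos hEi, dif_pos hEj, image_comp] using
          (disjoint_image_iff h.injective).2
            (hdisj (i := ⟨i, hEi⟩) (j := ⟨j, hEj⟩) (by simpa using hij))
      · simp [Function.onFun, not_nonempty_iff_eq_empty.1 hEj]
    · simp [Function.onFun, not_nonempty_iff_eq_empty.1 hEi]
  · obtain ⟨i, y, hy, hyz⟩ := mem_iUnion.1 (hcover ▸ mem_univ (h.symm z))
    refine mem_iUnion.2 ⟨i.1, y, hy, ?_⟩
    simp only [dif_pos (show (E i.1).Nonempty from i.2), comp_apply, hyz, h.apply_symm_apply]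

theorem stmt_11_general (τ : Cardinal.{u}) (hτ : ℵ₀ ≤ τ)
    (Λ : Type u) (hΛ : #Λ = 2 ^ τ)
    (Xa : Λ → Type u) [∀ a, TopologicalSpace (Xa a)]
    (hne : ∀ a, Nonempty (Xa a))
    (hiw : ∀ a, ∃ (Y : Type u) (_ : TopologicalSpace Y), T35Space Y ∧
      (∃ bs : Set (Set Y), TopologicalSpace.IsTopologicalBasis bs ∧ #bs ≤ τ) ∧
      ∃ f : Xa a → Y, Continuous f ∧ Function.Bijective f) :
    ∀ S : Set (Σ a, Xa a), #S < 2 ^ τ →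
      (∃ f : ↥(Sᶜ) → (Quotient.out τ → ↥(Set.Icc (0 : ℝ) 1)),
        Continuous f ∧ Function.Bijective f) ∧
      Subcompact ↥(Sᶜ) := by
  intro S hS
  have hT : #(Quotient.out τ) = τ := mk_out τ
  have : Infinite (Quotient.out τ) := infinite_iff.2 (hT.symm ▸ hτ)
  have : Infinite Λ := infinite_iff.2 (hΛ ▸ hτ.trans (cantor τ).le)
  have hG (a : Λ) : ∃ g : Xa a → (Quotient.out τ → I), Continuous g ∧ Injective g := by
    obtain ⟨Y, _, _, ⟨B, hB, hBτ⟩, f, hf, hfb⟩ := hiw a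
    obtain ⟨j, hj, hji⟩ := exists_continuous_injective_pi hB (hBτ.trans_eq hT.symm)
    exact ⟨j ∘ f, hj.comp hf, hji.comp hfb.injective⟩
  choose G hGc hGi using hG
  have hE : #{a | (G a '' {x | ⟨a, x⟩ ∈ Sᶜ}).Nonempty} = 2 ^ #(Quotient.out τ) := by
    simp only [image_nonempty, hT, ← hΛ]
    exact mk_setOf_exists_sigma_notMem hne S (hΛ ▸ hS)
  obtain ⟨Φ, hΦc, hΦi, hdisj, hcover⟩ := exists_cube_placements _ hE
  have hf : Continuous fun q : ↥Sᶜ => Φ q.1.1 (G q.1.1 q.1.2) :=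
    (continuous_sigma (f := fun p : Σ a, Xa a => Φ p.1 (G p.1 p.2))
      fun a => (hΦc a).comp (hGc a)).comp continuous_subtype_val
  have hfb : Bijective fun q : ↥Sᶜ => Φ q.1.1 (G q.1.1 q.1.2) :=
    bijective_sigma_restrict Sᶜ (fun a => Φ a ∘ G a) (fun a => (hΦi a).comp (hGi a))
      (by simpa only [image_comp] using hdisj) (by simpa only [image_comp] using hcover)
  exact ⟨⟨_, hf, hfb⟩, _, inferInstance, inferInstance, inferInstance, _, hf, hfb⟩

/-- a topological sum of `2^τ` many nonempty Hausdorff spaces of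
`i`-weight at most `τ` becomes, after removing any set of fewer than `2^τ` points, a
space condensing onto the Tychonoff cube `[0,1]^τ`; in particular the sum is
`a_{<2^τ}`-subcompact. -/
theorem stmt_11 (τ : Cardinal.{u}) (hτ : ℵ₀ ≤ τ)
    (Λ : Type u) (hΛ : #Λ = 2 ^ τ)
    (Xa : Λ → Type u) [∀ a, TopologicalSpace (Xa a)] [∀ a, T2Space (Xa a)]
    (hne : ∀ a, Nonempty (Xa a))
    (hiw : ∀ a, ∃ (Y : Type u) (_ : TopologicalSpace Y), T35Space Y ∧
      (∃ bs : Set (Set Y), TopologicalSpace.IsTopologicalBasis bs ∧ #bs ≤ τ) ∧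
      ∃ f : Xa a → Y, Continuous f ∧ Function.Bijective f) :
    ∀ S : Set (Σ a, Xa a), #S < 2 ^ τ →
      (∃ f : ↥(Sᶜ) → (Quotient.out τ → ↥(Set.Icc (0 : ℝ) 1)),
        Continuous f ∧ Function.Bijective f) ∧
      Subcompact ↥(Sᶜ) :=
  stmt_11_general τ hτ Λ hΛ Xa hne hiw
end

section
/- Let τ be an infinite cardinal, let {X_α : α ∈ Λ} be a family of compact Hausdorff spaces, and let X = ⊕{X_α : α ∈ Λ} ∪ {ξ} be the one-point compactification of the topological sum ⊕X_α, i.e., basic neighborhoods of the added point ξ contain all but finitely many of the sets X_α. Then X is an a_τ-space if and only if X_α is an a_τ-space for every α ∈ Λ. -/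
open Cardinal Topology
open scoped OnePoint

universe u

def collapseSetoid {K : Type u} (S : Set K) : Setoid K where
  r x y := x = y ∨ (x ∈ S ∧ y ∈ S)
  iseqv := by
    refine ⟨fun x => Or.inl rfl, ?_, ?_⟩
    · rintro x y (rfl | ⟨h1, h2⟩)
      exacts [Or.inl rfl, Or.inr ⟨h2, h1⟩]
    · rintro x y z (rfl | ⟨h1, h2⟩) (rfl | ⟨h3, h4⟩)
      exacts [Or.inl rfl, Or.inr ⟨h3, h4⟩, Or.inr ⟨h1, h2⟩, Or.inr ⟨h1, h4⟩]

theorem collapse_t2 {K : Type u} [TopologicalSpace K] [CompactSpace K] [T2Space K]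
    (S : Set K) (hS : IsClosed S) : T2Space (Quotient (collapseSetoid S)) := by
  set π : K → Quotient (collapseSetoid S) := Quotient.mk _ with hπ
  have hrel : ∀ x y : K, π x = π y ↔ (x = y ∨ (x ∈ S ∧ y ∈ S)) := by
    intro x y
    exact Quotient.eq (r := collapseSetoid S)
  have key : ∀ x y : K, x ≠ y → y ∉ S →
      ∃ U V : Set (Quotient (collapseSetoid S)),
        IsOpen U ∧ IsOpen V ∧ π x ∈ U ∧ π y ∈ V ∧ Disjoint U V := by
    intro x y hxy hyS
    have hdisj : Disjoint (S ∪ {x}) ({y} : Set K) := by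
      rw [Set.disjoint_singleton_right]
      rintro (h | h)
      · exact hyS h
      · exact hxy (Set.mem_singleton_iff.mp h).symm
    obtain ⟨U, V, hU, hV, hsU, htV, hUV⟩ :=
      normal_separation (hS.union isClosed_singleton) isClosed_singleton hdisj
    have hSU : S ⊆ U := fun s hs => hsU (Or.inl hs)
    have hVS : ∀ v ∈ V, v ∉ S := fun v hv hvS =>
      Set.disjoint_left.mp hUV (hSU hvS) hv
    have satU : π ⁻¹' (π '' U) = U := by
      apply Set.Subset.antisymm
      · rintro z hz
        obtain ⟨u, hu, huz⟩ := hz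
        rcases (hrel u z).mp huz with rfl | ⟨h1, h2⟩
        · exact hu
        · exact hSU h2
      · exact Set.subset_preimage_image _ _
    have satV : π ⁻¹' (π '' V) = V := by
      apply Set.Subset.antisymm
      · rintro z hz
        obtain ⟨v, hv, hvz⟩ := hz
        rcases (hrel v z).mp hvz with rfl | ⟨h1, h2⟩
        · exact hv
        · exact absurd h1 (hVS v hv)
      · exact Set.subset_preimage_image _ _
    refine ⟨π '' U, π '' V, ?_, ?_, ⟨x, hsU (Or.inr rfl), rfl⟩, ⟨y, htV rfl, rfl⟩, ?_⟩
    · rw [← isQuotientMap_quotient_mk'.isOpen_preimage]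
      show IsOpen (π ⁻¹' (π '' U)); rw [satU]; exact hU
    · rw [← isQuotientMap_quotient_mk'.isOpen_preimage]
      show IsOpen (π ⁻¹' (π '' V)); rw [satV]; exact hV
    · rw [Set.disjoint_left]
      rintro q ⟨u, hu, rfl⟩ ⟨v, hv, hvu⟩
      rcases (hrel v u).mp hvu with rfl | ⟨h1, h2⟩
      · exact Set.disjoint_left.mp hUV hu hv
      · exact hVS v hv h1
  constructor
  intro a b hab
  induction a using Quotient.ind with | _ x => ?_
  induction b using Quotient.ind with | _ y => ?_
  have hxy : x ≠ y := fun h => hab (by rw [h])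
  have hnot : ¬(x ∈ S ∧ y ∈ S) := fun h => hab ((hrel x y).mpr (Or.inr h))
  rcases not_and_or.mp hnot with hx | hy
  · obtain ⟨U, V, hU, hV, hxU, hyV, hUV⟩ := key y x hxy.symm hx
    exact ⟨V, U, hV, hU, hyV, hxU, hUV.symm⟩
  · obtain ⟨U, V, hU, hV, hxU, hyV, hUV⟩ := key x y hxy hy
    exact ⟨U, V, hU, hV, hxU, hyV, hUV⟩

theorem lemA {Z K : Type u} [TopologicalSpace Z] [TopologicalSpace K] [CompactSpace K]
    [T2Space K] {S : Set K} (hS : IsClosed S) {f : Z → K} (hf : Continuous f)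
    (hinj : Function.Injective f) (hr : Set.range f = Sᶜ) (z₀ : Z) : Subcompact Z := by
  set S' : Set K := S ∪ {f z₀} with hS'def
  have hS' : IsClosed S' := hS.union isClosed_singleton
  have hfS : ∀ z, f z ∉ S := fun z hz => by
    have : f z ∈ Set.range f := ⟨z, rfl⟩
    rw [hr] at this; exact this hz
  refine ⟨Quotient (collapseSetoid S'), inferInstance, Quotient.compactSpace,
    collapse_t2 _ hS', fun z => Quotient.mk _ (f z), continuous_quotient_mk'.comp hf, ?_, ?_⟩
  · intro z1 z2 h
    rcases (Quotient.eq (r := collapseSetoid S')).mp h with h | ⟨h1, h2⟩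
    · exact hinj h
    · have e1 : f z1 = f z₀ := by rcases h1 with h | h; exact absurd h (hfS z1); exact h
      have e2 : f z2 = f z₀ := by rcases h2 with h | h; exact absurd h (hfS z2); exact h
      exact hinj (e1.trans e2.symm)
  · intro q
    induction q using Quotient.ind with | _ k => ?_
    by_cases hk : k ∈ S
    · exact ⟨z₀, Quotient.sound (Or.inr ⟨Or.inr rfl, Or.inl hk⟩)⟩
    · have : k ∈ Set.range f := by rw [hr]; exact hk
      obtain ⟨z, hz⟩ := this
      exact ⟨z, congrArg _ hz⟩


theorem subcompact_of_isEmpty {Z : Type u} [TopologicalSpace Z] [IsEmpty Z] : Subcompact Z := by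
  refine ⟨Z, inferInstance, ?_, ⟨fun x => isEmptyElim x⟩, id, continuous_id, Function.bijective_id⟩
  constructor
  rw [Set.univ_eq_empty_iff.mpr ‹_›]
  exact isCompact_empty

theorem necessity {Λ : Type u} (Xa : Λ → Type u) [∀ a, TopologicalSpace (Xa a)]
    [∀ a, CompactSpace (Xa a)] [∀ a, T2Space (Xa a)]
    (τ : Cardinal.{u}) (hX : ATauSpace τ (OnePoint (Σ a, Xa a))) (a : Λ) :
    ATauSpace τ (Xa a) := by
  refine ⟨inferInstance, inferInstance, fun C hC => ?_⟩
  by_cases hne : Nonempty ↥(Cᶜ)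
  swap
  · have : IsEmpty ↥(Cᶜ) := not_nonempty_iff.mp hne
    exact subcompact_of_isEmpty
  obtain ⟨z₀⟩ := hne
  set ι : Xa a → OnePoint (Σ b, Xa b) := fun x => ((⟨a, x⟩ : Σ b, Xa b) : OnePoint (Σ b, Xa b))
    with hιdef
  have hι : IsOpenEmbedding ι :=
    OnePoint.isOpenEmbedding_coe.comp IsOpenEmbedding.sigmaMk
  set D : Set (OnePoint (Σ b, Xa b)) := ι '' C with hDdef
  have hD : #D ≤ τ := le_trans Cardinal.mk_image_le hC
  obtain ⟨K, tK, cK, t2K, f, hf, hbij⟩ := hX.2.2 D hD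
  have hDsub : D ⊆ Set.range ι := Set.image_subset_range _ _
  -- the embedding e : ↥(Cᶜ) → ↥(Dᶜ)
  have hmem : ∀ x : ↥(Cᶜ), ι x.1 ∈ Dᶜ := by
    intro x hx
    obtain ⟨c, hc, hcx⟩ := hx
    exact x.2 (hι.injective hcx ▸ hc)
  set e : ↥(Cᶜ) → ↥(Dᶜ) := fun x => ⟨ι x.1, hmem x⟩ with hedef
  have he_cont : Continuous e :=
    Continuous.subtype_mk (hι.continuous.comp continuous_subtype_val) _
  have he_inj : Function.Injective e := fun x y h =>
    Subtype.ext (hι.injective (congrArg Subtype.val h))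
  -- the complement of the range of e
  have hrange_e : (Set.range e)ᶜ = {y : ↥(Dᶜ) | y.1 ∉ Set.range ι} := by
    ext y
    simp only [Set.mem_compl_iff, Set.mem_range, Set.mem_setOf_eq]
    constructor
    · intro h hy
      obtain ⟨x, hx⟩ := hy
      have hxC : x ∈ Cᶜ := by
        intro hxC
        exact y.2 ⟨x, hxC, hx⟩
      exact h ⟨⟨x, hxC⟩, Subtype.ext hx⟩
    · rintro h ⟨x, rfl⟩
      exact h ⟨x.1, rfl⟩
  set B : Set ↥(Dᶜ) := {y : ↥(Dᶜ) | y.1 ∉ Set.range ι} with hBdef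
  have hBcompact : IsCompact B := by
    rw [Topology.IsEmbedding.subtypeVal.isCompact_iff]
    have himg : Subtype.val '' B = (Set.range ι)ᶜ := by
      apply Set.Subset.antisymm
      · rintro _ ⟨y, hy, rfl⟩; exact hy
      · intro y hy
        have hyD : y ∈ Dᶜ := fun hyD => hy (hDsub hyD)
        exact ⟨⟨y, hyD⟩, hy, rfl⟩
    rw [himg]
    exact (hι.isOpen_range.isClosed_compl).isCompact
  have hScompact : IsCompact (f '' B) := hBcompact.image hf
  have hSclosed : IsClosed (f '' B) := hScompact.isClosed
  have hr : Set.range (f ∘ e) = (f '' B)ᶜ := by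
    rw [← hrange_e, Set.image_compl_eq hbij, compl_compl, Set.range_comp]
  exact lemA hSclosed (hf.comp he_cont) (hbij.injective.comp he_inj) hr z₀


instance sigmaWLC {ι : Type*} (π : ι → Type*) [∀ i, TopologicalSpace (π i)]
    [∀ i, CompactSpace (π i)] : WeaklyLocallyCompactSpace (Σ i, π i) :=
  ⟨fun z => ⟨Set.range (Sigma.mk z.1), isCompact_range continuous_sigmaMk,
    IsOpenEmbedding.sigmaMk.isOpen_range.mem_nhds ⟨z.2, rfl⟩⟩⟩

/-- The main case-1 construction: if every summand is an `a_τ`-space and `∞ ∉ C`,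
then `X \ C` condenses onto a compact Hausdorff space. -/
theorem case1 {Λ : Type u} (Xa : Λ → Type u) [∀ a, TopologicalSpace (Xa a)]
    [∀ a, CompactSpace (Xa a)] [∀ a, T2Space (Xa a)]
    (τ : Cardinal.{u}) (h : ∀ a, ATauSpace τ (Xa a))
    (C : Set (OnePoint (Σ a, Xa a))) (hC : #C ≤ τ)
    (hinf : (∞ : OnePoint (Σ a, Xa a)) ∉ C) :
    ∃ (Y : Type u) (tY : TopologicalSpace Y), CompactSpace Y ∧ T2Space Y ∧
      ∃ G : ↥(Cᶜ) → Y, Continuous G ∧ Function.Bijective G := by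
  classical
  set Ca : ∀ a, Set (Xa a) := fun a => {x : Xa a | ((⟨a, x⟩ : Σ b, Xa b) : OnePoint (Σ b, Xa b)) ∈ C} with hCadef
  have hCa : ∀ a, #(Ca a) ≤ τ := by
    intro a
    refine le_trans (Cardinal.mk_le_of_injective (f := fun x : ↥(Ca a) =>
      (⟨((⟨a, x.1⟩ : Σ b, Xa b) : OnePoint (Σ b, Xa b)), x.2⟩ : ↥C)) ?_) hC
    intro x y hxy
    have h1 : ((⟨a, x.1⟩ : Σ b, Xa b) : OnePoint (Σ b, Xa b)) = ((⟨a, y.1⟩ : Σ b, Xa b) : OnePoint (Σ b, Xa b)) :=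
      congrArg Subtype.val hxy
    have h2 : (⟨a, x.1⟩ : Σ b, Xa b) = ⟨a, y.1⟩ := OnePoint.coe_injective h1
    exact Subtype.ext (sigma_mk_injective h2)
  choose K tK cK t2K g hgc hgbij using fun a => (h a).2.2 (Ca a) (hCa a)
  letI : ∀ a, TopologicalSpace (K a) := tK
  haveI : ∀ a, CompactSpace (K a) := cK
  haveI : ∀ a, T2Space (K a) := t2K
  set Y := OnePoint (Σ a, K a) with hYdef
  refine ⟨Y, inferInstance, inferInstance, inferInstance, ?_⟩
  -- the map G
  set G : ↥(Cᶜ) → Y := fun z =>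
    match z with
    | ⟨Option.none, _⟩ => (∞ : Y)
    | ⟨Option.some ⟨a, x⟩, hz⟩ => ((⟨a, g a ⟨x, hz⟩⟩ : Σ b, K b) : Y)
    with hGdef
  have hGnone : ∀ (hz : (∞ : OnePoint (Σ b, Xa b)) ∈ Cᶜ), G ⟨∞, hz⟩ = ∞ := fun _ => rfl
  have hGsome : ∀ (a : Λ) (x : Xa a) (hz : (((⟨a, x⟩ : Σ b, Xa b) : OnePoint (Σ b, Xa b))) ∈ Cᶜ),
      G ⟨((⟨a, x⟩ : Σ b, Xa b) : OnePoint (Σ b, Xa b)), hz⟩ = ((⟨a, g a ⟨x, hz⟩⟩ : Σ b, K b) : Y) :=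
    fun _ _ _ => rfl
  refine ⟨G, ?_, ?_, ?_⟩
  · -- continuity
    rw [continuous_iff_continuousAt]
    rintro ⟨(_ | ⟨a, x⟩), hz⟩
    · -- continuity at the point at infinity
      intro s hs
      have hGz : G ⟨Option.none, hz⟩ = (∞ : Y) := rfl
      rw [hGz] at hs
      obtain ⟨U, hUs, hU, hUinf⟩ := mem_nhds_iff.mp hs
      have hScpt : IsCompact (((↑) ⁻¹' U : Set (Σ a, K a))ᶜ) :=
        ((OnePoint.isOpen_iff_of_mem' hUinf).mp hU).1
      have hcover : (((↑) ⁻¹' U : Set (Σ a, K a))ᶜ) ⊆ ⋃ a, Set.range (Sigma.mk a) :=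
        fun p _ => Set.mem_iUnion.mpr ⟨p.1, ⟨p.2, rfl⟩⟩
      obtain ⟨F, hF⟩ := hScpt.elim_finite_subcover (fun a => Set.range (Sigma.mk a))
        (fun a => IsOpenEmbedding.sigmaMk.isOpen_range) hcover
      set T : Set (Σ a, Xa a) := ⋃ a ∈ F, Set.range (Sigma.mk a) with hTdef
      have hTcpt : IsCompact T :=
        F.isCompact_biUnion (fun a _ => isCompact_range continuous_sigmaMk)
      have hTclosed : IsClosed T :=
        F.finite_toSet.isClosed_biUnion (fun a _ => IsClosedEmbedding.sigmaMk.isClosed_range)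
      set W : Set (OnePoint (Σ b, Xa b)) := (((↑) : (Σ b, Xa b) → OnePoint (Σ b, Xa b)) '' T)ᶜ with hWdef
      have hWopen : IsOpen W := OnePoint.isOpen_compl_image_coe.mpr ⟨hTclosed, hTcpt⟩
      have hWinf : (∞ : OnePoint (Σ b, Xa b)) ∈ W := fun hmem => OnePoint.infty_notMem_image_coe hmem
      rw [Filter.mem_map]
      refine Filter.mem_of_superset
        (((hWopen.preimage continuous_subtype_val).mem_nhds (by exact hWinf)) :
          (Subtype.val ⁻¹' W ∈ 𝓝 (⟨Option.none, hz⟩ : ↥(Cᶜ)))) ?_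
      rintro ⟨(_ | ⟨b, xb⟩), hw⟩ hwW
      · exact hUs hUinf
      · refine hUs ?_
        have hbF : b ∉ F := by
          intro hbF
          exact hwW ⟨⟨b, xb⟩, Set.mem_biUnion hbF ⟨xb, rfl⟩, rfl⟩
        show ((⟨b, g b ⟨xb, hw⟩⟩ : Σ a, K a) : Y) ∈ U
        have : (⟨b, g b ⟨xb, hw⟩⟩ : Σ a, K a) ∈ ((↑) ⁻¹' U : Set (Σ a, K a)) := by
          by_contra hcon
          have := hF hcon
          obtain ⟨c, hcmem, hcr⟩ := Set.mem_iUnion₂.mp this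
          obtain ⟨k, hk⟩ := hcr
          have : c = b := congrArg Sigma.fst hk
          exact hbF (this ▸ hcmem)
        exact this
    · -- continuity at an ordinary point
      set e : ↥((Ca a)ᶜ) → ↥(Cᶜ) := fun u => ⟨((⟨a, u.1⟩ : Σ b, Xa b) : OnePoint (Σ b, Xa b)), u.2⟩ with hedef
      set ιa : Xa a → OnePoint (Σ b, Xa b) := fun x => ((⟨a, x⟩ : Σ b, Xa b) : OnePoint (Σ b, Xa b)) with hιadef
      have hιa : IsOpenEmbedding ιa := OnePoint.isOpenEmbedding_coe.comp IsOpenEmbedding.sigmaMk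
      have he_cont : Continuous e :=
        Continuous.subtype_mk (hιa.continuous.comp continuous_subtype_val) _
      have he : IsOpenEmbedding e := by
        rw [Topology.isOpenEmbedding_iff]
        constructor
        · refine Topology.IsEmbedding.of_comp he_cont continuous_subtype_val ?_
          have : (Subtype.val ∘ e) = ιa ∘ Subtype.val := rfl
          rw [this]
          exact hιa.isEmbedding.comp Topology.IsEmbedding.subtypeVal
        · have hre : Set.range e = Subtype.val ⁻¹' (Set.range ιa) := by
            apply Set.Subset.antisymm
            · rintro _ ⟨u, rfl⟩; exact ⟨u.1, rfl⟩
            · rintro y ⟨x, hx⟩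
              have hxC : x ∈ (Ca a)ᶜ := by
                intro hxC
                have hxc2 : (ιa x) ∈ C := hxC
                rw [hx] at hxc2
                exact y.2 hxc2
              exact ⟨⟨x, hxC⟩, Subtype.ext hx⟩
          rw [hre]
          exact hιa.isOpen_range.preimage continuous_subtype_val
      have hx' : x ∈ (Ca a)ᶜ := hz
      have hpt : (⟨Option.some ⟨a, x⟩, hz⟩ : ↥(Cᶜ)) = e ⟨x, hx'⟩ := rfl
      rw [hpt, ← he.continuousAt_iff]
      have hcomp : (G ∘ e) = fun u : ↥((Ca a)ᶜ) => ((⟨a, g a u⟩ : Σ b, K b) : Y) := rfl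
      rw [hcomp]
      exact (OnePoint.continuous_coe.comp (continuous_sigmaMk.comp (hgc a))).continuousAt
  · -- injectivity
    rintro ⟨(_ | ⟨a, x⟩), hz⟩ ⟨(_ | ⟨b, y⟩), hw⟩ hGzw
    · rfl
    · exact absurd hGzw.symm (OnePoint.coe_ne_infty _)
    · exact absurd hGzw (OnePoint.coe_ne_infty _)
    · have h1 : (⟨a, g a ⟨x, hz⟩⟩ : Σ c, K c) = ⟨b, g b ⟨y, hw⟩⟩ :=
        OnePoint.coe_injective hGzw
      obtain ⟨rfl, h2⟩ := Sigma.mk.inj_iff.mp h1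
      have h3 : g a ⟨x, hz⟩ = g a ⟨y, hw⟩ := eq_of_heq h2
      have h4 := (hgbij a).injective h3
      have h5 : x = y := congrArg Subtype.val h4
      subst h5
      rfl
  · -- surjectivity
    rintro (_ | ⟨a, k⟩)
    · exact ⟨⟨∞, hinf⟩, rfl⟩
    · obtain ⟨⟨x, hx⟩, hk⟩ := (hgbij a).surjective k
      refine ⟨⟨((⟨a, x⟩ : Σ b, Xa b) : OnePoint (Σ b, Xa b)), hx⟩, ?_⟩
      show ((⟨a, g a ⟨x, hx⟩⟩ : Σ b, K b) : Y) = ((⟨a, k⟩ : Σ b, K b) : Y)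
      rw [hk]


/-- the one-point compactification of a topological sum of compact
Hausdorff spaces `X_α` is an `a_τ`-space iff every `X_α` is an `a_τ`-space. -/
theorem stmt_12 (τ : Cardinal.{u}) (hτ : ℵ₀ ≤ τ)
    (Λ : Type u) (Xa : Λ → Type u) [∀ a, TopologicalSpace (Xa a)]
    [∀ a, CompactSpace (Xa a)] [∀ a, T2Space (Xa a)] :
    ATauSpace τ (OnePoint (Σ a, Xa a)) ↔ ∀ a, ATauSpace τ (Xa a) := by
  classical
  constructor
  · intro hX a
    exact necessity Xa τ hX a
  · intro h
    refine ⟨inferInstance, inferInstance, fun C hC => ?_⟩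
    by_cases hinf : (∞ : OnePoint (Σ a, Xa a)) ∈ C
    · by_cases hne : Nonempty ↥(Cᶜ)
      · obtain ⟨z₀⟩ := hne
        set C' : Set (OnePoint (Σ a, Xa a)) := C \ {∞} with hC'def
        have hC'card : #C' ≤ τ :=
          le_trans (Cardinal.mk_le_mk_of_subset Set.diff_subset) hC
        obtain ⟨Y, tY, cY, t2Y, G, hGc, hGbij⟩ :=
          case1 Xa τ h C' hC'card (fun hm => hm.2 rfl)
        have hinf' : (∞ : OnePoint (Σ a, Xa a)) ∈ C'ᶜ := fun hm => hm.2 rfl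
        set ξ : ↥(C'ᶜ) := ⟨∞, hinf'⟩ with hξdef
        have hsub : ∀ z : ↥(Cᶜ), z.1 ∈ C'ᶜ := fun z hz => z.2 hz.1
        set e : ↥(Cᶜ) → ↥(C'ᶜ) := fun z => ⟨z.1, hsub z⟩ with hedef
        have he_cont : Continuous e := Continuous.subtype_mk continuous_subtype_val _
        have he_inj : Function.Injective e := by
          intro x y hxy
          have h1 := congrArg Subtype.val hxy
          exact Subtype.ext h1
        have hr : Set.range (G ∘ e) = ({G ξ} : Set Y)ᶜ := by
          ext y
          simp only [Set.mem_range, Function.comp_apply, Set.mem_compl_iff,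
            Set.mem_singleton_iff]
          constructor
          · rintro ⟨z, rfl⟩ hy
            have h1 : e z = ξ := hGbij.injective hy
            have h2 : z.1 = ∞ := congrArg Subtype.val h1
            exact z.2 (h2 ▸ hinf)
          · intro hy
            obtain ⟨w, rfl⟩ := hGbij.surjective y
            have hwinf : w.1 ≠ ∞ := by
              intro hw1
              exact hy (congrArg G (Subtype.ext hw1))
            have hwC : w.1 ∉ C := by
              intro hwC
              exact w.2 ⟨hwC, hwinf⟩
            exact ⟨⟨w.1, hwC⟩, congrArg G (Subtype.ext rfl)⟩
        exact lemA isClosed_singleton (hGc.comp he_cont)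
          (hGbij.injective.comp he_inj) hr z₀
      · haveI : IsEmpty ↥(Cᶜ) := not_nonempty_iff.mp hne
        exact subcompact_of_isEmpty
    · obtain ⟨Y, tY, cY, t2Y, G, hGc, hGbij⟩ := case1 Xa τ h C hC hinf
      exact ⟨Y, tY, cY, t2Y, G, hGc, hGbij⟩
end

section
/- Let τ be an infinite cardinal, let X = ∏{X_α : α < τ} be a product of compact Hausdorff spaces each having more than one point, and let f : X → Y be a continuous surjection onto a Hausdorff space Y such that for every finite set A ⊆ τ and every x ∈ X the image f(π_A^{-1}(π_A x)) is not equal to the singleton {f(x)} (here π_A : X → ∏{X_α : α ∈ A} is the projection). Then Y is a strictly a_{ℵ₀}-space. -/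
open Cardinal Topology

universe u

section AuxSeq

/-- Recursive construction of a sequence where the `n`-th element's specification may
depend on the earlier elements. -/
lemma exists_seq_aux14 {St : Type*} (default0 : St) (P : ℕ → (ℕ → St) → St → Prop)
    (hdep : ∀ n g g' s, (∀ m, m < n → g m = g' m) → P n g s → P n g' s)
    (hex : ∀ n g, ∃ s, P n g s) :
    ∃ F : ℕ → St, ∀ n, P n F (F n) := by
  classical
  let L : ℕ → (ℕ → St) := fun n => Nat.rec (fun _ => default0)
    (fun n Ln => fun k => if k = n then Classical.choose (hex n Ln) else Ln k) n
  have hL : ∀ n k, L (n + 1) k = if k = n then Classical.choose (hex n (L n)) else L n k :=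
    fun n k => rfl
  let F : ℕ → St := fun n => L (n + 1) n
  have hFn : ∀ n, F n = Classical.choose (hex n (L n)) := by
    intro n
    show L (n+1) n = _
    rw [hL, if_pos rfl]
  have hcoh : ∀ n m, m < n → L n m = F m := by
    intro n
    induction n with
    | zero => intro m hm; omega
    | succ n ih =>
        intro m hm
        rw [hL]
        by_cases hmn : m = n
        · subst hmn; rw [if_pos rfl, hFn]
        · rw [if_neg hmn]; exact ih m (by omega)
  refine ⟨F, fun n => ?_⟩
  have hspec := Classical.choose_spec (hex n (L n))
  rw [hFn n]
  exact hdep n (L n) F _ (fun m hm => hcoh n m hm) hspec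

end AuxSeq

section AuxQuot

variable {Y : Type u} [TopologicalSpace Y] [CompactSpace Y] [T2Space Y]

lemma sat_closed_aux14 (st : Setoid Y) (hR : IsClosed {p : Y × Y | st.r p.1 p.2})
    {F : Set Y} (hF : IsClosed F) :
    IsClosed (Quotient.mk st ⁻¹' (Quotient.mk st '' F)) := by
  have heq : Quotient.mk st ⁻¹' (Quotient.mk st '' F)
      = Prod.fst '' ({p : Y × Y | st.r p.1 p.2} ∩ Set.univ ×ˢ F) := by
    ext y
    simp only [Set.mem_preimage, Set.mem_image, Set.mem_inter_iff, Set.mem_prod, Set.mem_univ,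
      true_and, Set.mem_setOf_eq, Prod.exists]
    constructor
    · rintro ⟨y', hy', hQ⟩
      exact ⟨y, y', ⟨Quotient.exact hQ.symm, hy'⟩, rfl⟩
    · rintro ⟨a, b, ⟨hab, hbF⟩, rfl⟩
      exact ⟨b, hbF, (Quotient.sound hab).symm⟩
  rw [heq]
  exact (((hR.inter (isClosed_univ.prod hF)).isCompact).image continuous_fst).isClosed

lemma mk_closedMap_aux14 (st : Setoid Y) (hR : IsClosed {p : Y × Y | st.r p.1 p.2}) :
    IsClosedMap (Quotient.mk st) := by
  intro F hF
  have hq : Topology.IsQuotientMap (Quotient.mk st) := isQuotientMap_quot_mk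
  rw [← hq.isClosed_preimage]
  exact sat_closed_aux14 st hR hF

lemma quot_t2_aux14 (st : Setoid Y) (hR : IsClosed {p : Y × Y | st.r p.1 p.2}) :
    T2Space (Quotient st) := by
  constructor
  intro a b hab
  obtain ⟨y1, rfl⟩ := Quotient.exists_rep a
  obtain ⟨y2, rfl⟩ := Quotient.exists_rep b
  set q : Y → Quotient st := Quotient.mk st with hqdef
  have hfib : ∀ y0 : Y, IsClosed {y : Y | st.r y y0} := by
    intro y0
    have : {y : Y | st.r y y0} = (fun y => (y, y0)) ⁻¹' {p : Y × Y | st.r p.1 p.2} := rfl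
    rw [this]
    exact hR.preimage (Continuous.prodMk continuous_id continuous_const)
  have hdisj : Disjoint {y : Y | st.r y y1} {y : Y | st.r y y2} := by
    rw [Set.disjoint_left]
    intro y hy1 hy2
    exact hab (Quotient.sound (st.iseqv.trans (st.iseqv.symm hy1) hy2))
  obtain ⟨U1, U2, hU1, hU2, hS1, hS2, hU12⟩ :=
    NormalSpace.normal _ _ (hfib y1) (hfib y2) hdisj
  refine ⟨(q '' U1ᶜ)ᶜ, (q '' U2ᶜ)ᶜ, ?_, ?_, ?_, ?_, ?_⟩
  · exact (mk_closedMap_aux14 st hR _ (isClosed_compl_iff.mpr hU1)).isOpen_compl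
  · exact (mk_closedMap_aux14 st hR _ (isClosed_compl_iff.mpr hU2)).isOpen_compl
  · intro hmem
    obtain ⟨w, hw, hqw⟩ := hmem
    exact hw (hS1 (Quotient.exact hqw))
  · intro hmem
    obtain ⟨w, hw, hqw⟩ := hmem
    exact hw (hS2 (Quotient.exact hqw))
  · rw [Set.disjoint_left]
    intro k hk1 hk2
    obtain ⟨w, rfl⟩ := Quotient.exists_rep k
    have hw1 : w ∈ U1 := by
      by_contra hw
      exact hk1 ⟨w, hw, rfl⟩
    have hw2 : w ∈ U2 := by
      by_contra hw
      exact hk2 ⟨w, hw, rfl⟩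
    exact Set.disjoint_left.mp hU12 hw1 hw2

end AuxQuot

section AuxStar

variable {ι : Type u} {Xa : ι → Type u} [∀ i, TopologicalSpace (Xa i)]
  {Y : Type u} [TopologicalSpace Y] [T2Space Y] {f : (∀ i, Xa i) → Y}

lemma step_lemma_aux14 (hf : Continuous f)
    (h : ∀ (A : Finset ι) (x : ∀ i, Xa i), f '' {x' | ∀ i ∈ A, x' i = x i} ≠ {f x})
    (x : ∀ i, Xa i) (A : Finset ι) (dd : Y) :
    ∃ (x' : ∀ i, Xa i) (A' : Finset ι), A ⊆ A' ∧ (∀ i ∈ A, x' i = x i) ∧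
      ∀ w : ∀ i, Xa i, (∀ i ∈ A', w i = x' i) → f w ≠ dd := by
  classical
  have hx : f x ∈ f '' {x' | ∀ i ∈ A, x' i = x i} := ⟨x, fun i _ => rfl, rfl⟩
  obtain ⟨w0, hw0mem, hw0⟩ : ∃ w0, (∀ i ∈ A, w0 i = x i) ∧ f w0 ≠ f x := by
    by_contra hcon
    push_neg at hcon
    apply h A x
    refine Set.eq_singleton_iff_unique_mem.mpr ⟨hx, ?_⟩
    rintro y ⟨w, hw, rfl⟩
    exact hcon w hw
  obtain ⟨ω, hωmem, hω⟩ : ∃ ω, (∀ i ∈ A, ω i = x i) ∧ f ω ≠ dd := by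
    by_cases hxd : f x = dd
    · exact ⟨w0, hw0mem, by rw [← hxd]; exact hw0⟩
    · exact ⟨x, fun i _ => rfl, hxd⟩
  obtain ⟨U, W, hU, hW, hfU, hdW, hUW⟩ := t2_separation hω
  have hop : IsOpen (f ⁻¹' U) := hU.preimage hf
  rw [isOpen_pi_iff] at hop
  obtain ⟨I, uu, huu, hsub⟩ := hop ω hfU
  refine ⟨ω, A ∪ I, Finset.subset_union_left, hωmem, ?_⟩
  intro w hw
  have hwU : f w ∈ U := by
    apply hsub
    intro i hi
    have : w i = ω i := hw i (Finset.mem_union_right _ hi)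
    rw [this]
    exact (huu i hi).2
  intro hwd
  rw [hwd] at hwU
  exact Set.disjoint_left.mp hUW hwU hdW

lemma star_aux14 (hf : Continuous f)
    (h : ∀ (A : Finset ι) (x : ∀ i, Xa i), f '' {x' | ∀ i ∈ A, x' i = x i} ≠ {f x})
    (x : ∀ i, Xa i) (A : Finset ι) (D : Set Y) (hD : D.Countable) :
    ∃ z : ∀ i, Xa i, (∀ i ∈ A, z i = x i) ∧ {i | z i ≠ x i}.Countable ∧ f z ∉ D := by
  obtain ⟨d, hd⟩ : ∃ d : ℕ → Y, D ⊆ Set.range d := by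
    rcases D.eq_empty_or_nonempty with hD0 | hD0
    · exact ⟨fun _ => f x, by simp [hD0]⟩
    · obtain ⟨d, hd⟩ := hD.exists_eq_range hD0
      exact ⟨d, hd.le⟩
  have hstep : ∀ (k : ℕ) (st : (∀ i, Xa i) × Finset ι),
      ∃ st' : (∀ i, Xa i) × Finset ι, st.2 ⊆ st'.2 ∧ (∀ i ∈ st.2, st'.1 i = st.1 i) ∧
        ∀ w : ∀ i, Xa i, (∀ i ∈ st'.2, w i = st'.1 i) → f w ≠ d k := by
    intro k st
    obtain ⟨x', A', hAA, hagr, havd⟩ := step_lemma_aux14 hf h st.1 st.2 (d k)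
    exact ⟨(x', A'), hAA, hagr, havd⟩
  let seq : ℕ → (∀ i, Xa i) × Finset ι :=
    fun k => Nat.rec (x, A) (fun k ih => Classical.choose (hstep k ih)) k
  have hseq : ∀ k, seq (k + 1) = Classical.choose (hstep k (seq k)) := fun k => rfl
  have hmono : ∀ k, (seq k).2 ⊆ (seq (k + 1)).2 := by
    intro k
    rw [hseq k]
    exact (Classical.choose_spec (hstep k (seq k))).1
  have hagr : ∀ k, ∀ i ∈ (seq k).2, (seq (k + 1)).1 i = (seq k).1 i := by
    intro k
    rw [hseq k]
    exact (Classical.choose_spec (hstep k (seq k))).2.1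
  have havd : ∀ k, ∀ w : ∀ i, Xa i, (∀ i ∈ (seq (k + 1)).2, w i = (seq (k + 1)).1 i)
      → f w ≠ d k := by
    intro k
    rw [hseq k]
    exact (Classical.choose_spec (hstep k (seq k))).2.2
  have hmono' : ∀ k k', k ≤ k' → (seq k).2 ⊆ (seq k').2 := by
    intro k k' hkk
    induction k' , hkk using Nat.le_induction with
    | base => exact subset_rfl
    | succ n hn ih => exact ih.trans (hmono n)
  have hstab : ∀ k k', k ≤ k' → ∀ i ∈ (seq k).2, (seq k').1 i = (seq k).1 i := by
    intro k k' hkk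
    induction k' , hkk using Nat.le_induction with
    | base => intro i _; rfl
    | succ n hn ih =>
        intro i hi
        rw [hagr n i (hmono' k n hn hi)]
        exact ih i hi
  classical
  let z : ∀ i, Xa i := fun i =>
    if hk : ∃ k, i ∈ (seq k).2 then (seq (Nat.find hk)).1 i else x i
  have hz1 : ∀ k, ∀ i ∈ (seq k).2, z i = (seq k).1 i := by
    intro k i hi
    have hk : ∃ k, i ∈ (seq k).2 := ⟨k, hi⟩
    have h1 : z i = (seq (Nat.find hk)).1 i := dif_pos hk
    have h2 : Nat.find hk ≤ k := Nat.find_min' hk hi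
    rw [h1, hstab (Nat.find hk) k h2 i (Nat.find_spec hk)]
  refine ⟨z, ?_, ?_, ?_⟩
  · intro i hi
    have : z i = (seq 0).1 i := hz1 0 i hi
    exact this
  · have hsub : {i | z i ≠ x i} ⊆ ⋃ k, ((seq k).2 : Set ι) := by
      intro i hi
      by_contra hni
      simp only [Set.mem_iUnion, Finset.mem_coe] at hni
      exact hi (dif_neg (by simpa using hni))
    exact Set.Countable.mono hsub
      (Set.countable_iUnion fun k => (seq k).2.countable_toSet)
  · intro hzD
    obtain ⟨k, hk⟩ := hd hzD
    exact havd k z (hz1 (k + 1)) hk.symm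

end AuxStar


/-- if `X` is a product of `τ` many nontrivial compact Hausdorff spaces and
`f : X → Y` is a continuous surjection onto a Hausdorff space such that for each finite
set `A` of coordinates and each `x`, the image `f(π_A⁻¹(π_A x))` is not the singleton
`{f x}`, then `Y` is a strictly `a_ℵ₀`-space. -/
theorem stmt_14 (τ : Cardinal.{u}) (hτ : ℵ₀ ≤ τ)
    (ι : Type u) (hι : #ι = τ)
    (Xa : ι → Type u) [∀ i, TopologicalSpace (Xa i)] [∀ i, CompactSpace (Xa i)]
    [∀ i, T2Space (Xa i)] (hnt : ∀ i, Nontrivial (Xa i))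
    (Y : Type u) [TopologicalSpace Y] [T2Space Y]
    (f : (∀ i, Xa i) → Y) (hf : Continuous f) (hsurj : Function.Surjective f)
    (h : ∀ (A : Finset ι) (x : ∀ i, Xa i),
      f '' {x' | ∀ i ∈ A, x' i = x i} ≠ {f x}) :
    StrictATauSpace Cardinal.aleph0 Y := by
  classical
  have hXne : ∀ i, Nonempty (Xa i) := fun i => (hnt i).to_nonempty
  haveI : Nonempty (∀ i, Xa i) := ⟨fun i => Classical.arbitrary _⟩
  haveI hYc : CompactSpace Y := ⟨hsurj.range_eq ▸ isCompact_range hf⟩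
  haveI : Infinite ι := Cardinal.infinite_iff.mpr (by rw [hι]; exact hτ)
  refine ⟨inferInstance, inferInstance, ?_⟩
  intro C hCcard
  have hCc : C.Countable := Cardinal.le_aleph0_iff_set_countable.mp hCcard
  rcases C.eq_empty_or_nonempty with hC0 | hC0
  · refine ⟨Y, ‹TopologicalSpace Y›, inferInstance, inferInstance, id, continuous_id, ?_, ?_⟩
    · intro a b hab
      exact Subtype.ext hab
    · intro y
      exact ⟨⟨y, by simp [hC0]⟩, rfl⟩
  obtain ⟨c, hc⟩ := hCc.exists_eq_range hC0
  have hcC : ∀ n, c n ∈ C := fun n => by rw [hc]; exact ⟨n, rfl⟩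
  have hιne : Nonempty ι := inferInstance
  let i₀ : ι := Classical.arbitrary ι
  let Lead : ℕ → Prop := fun n => ∀ m, m < n → c m ≠ c n
  let St := ((∀ i, Xa i) × (∀ i, Xa i) × (ℕ → ι))
  haveI : Nonempty St := ⟨⟨Classical.arbitrary _, Classical.arbitrary _, fun _ => i₀⟩⟩
  let Afin : ℕ → (ℕ → St) → Finset ι := fun n F =>
    (Finset.range n ×ˢ Finset.range n).image fun q => (F q.1).2.2 q.2
  let Dst : ℕ → (ℕ → St) → Set Y := fun n F =>
    C ∪ ⋃ m ∈ Set.Iio n, {f (F m).2.1}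
  let P : ℕ → (ℕ → St) → St → Prop := fun n F s =>
    f s.1 = c n ∧
      (Lead n → (∀ i ∈ Afin n F, s.2.1 i = s.1 i) ∧ f s.2.1 ∉ Dst n F ∧
        Set.range s.2.2 = {i | s.2.1 i ≠ s.1 i} ∪ {i₀}) ∧
      (¬ Lead n → s.2.1 = s.1)
  have hdep : ∀ n g g' s, (∀ m, m < n → g m = g' m) → P n g s → P n g' s := by
    intro n g g' s hgg hP
    have hA : Afin n g' = Afin n g := by
      apply Finset.image_congr
      intro q hq
      have hq1 : q.1 < n := Finset.mem_range.mp (Finset.mem_product.mp hq).1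
      show (g' q.1).2.2 q.2 = (g q.1).2.2 q.2
      rw [← hgg q.1 hq1]
    have hD : Dst n g' = Dst n g := by
      show C ∪ _ = C ∪ _
      congr 1
      apply Set.iUnion₂_congr
      intro m hm
      rw [hgg m hm]
    refine ⟨hP.1, fun hl => ?_, hP.2.2⟩
    rw [hA, hD]
    exact hP.2.1 hl
  have hex : ∀ n g, ∃ s, P n g s := by
    intro n g
    obtain ⟨x, hx⟩ := hsurj (c n)
    by_cases hl : Lead n
    · have hDc : (Dst n g).Countable :=
        hCc.union (Set.Countable.biUnion (Set.to_countable _)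
          fun m _ => Set.countable_singleton _)
      obtain ⟨z, hz1, hz2, hz3⟩ := star_aux14 hf h x (Afin n g) (Dst n g) hDc
      obtain ⟨β, hβ⟩ := Set.Countable.exists_eq_range
        (hz2.union (Set.countable_singleton i₀)) ⟨i₀, Or.inr rfl⟩
      exact ⟨(x, z, β), hx, fun _ => ⟨hz1, hz3, hβ.symm⟩, fun hnl => absurd hl hnl⟩
    · exact ⟨(x, x, fun _ => i₀), hx, fun hl' => absurd hl' hl, fun _ => rfl⟩
  obtain ⟨F, hF⟩ := exists_seq_aux14 (Classical.arbitrary St) P hdep hex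
  let xs : ℕ → ∀ i, Xa i := fun n => (F n).1
  let zs : ℕ → ∀ i, Xa i := fun n => (F n).2.1
  let βs : ℕ → ℕ → ι := fun n => (F n).2.2
  let p : ℕ → Y := fun n => f (zs n)
  have hfx : ∀ n, f (xs n) = c n := fun n => (hF n).1
  have hzx : ∀ n, ¬ Lead n → zs n = xs n := fun n => (hF n).2.2
  have hlead : ∀ n, Lead n → (∀ i ∈ Afin n F, zs n i = xs n i) ∧ p n ∉ Dst n F ∧
      Set.range (βs n) = {i | zs n i ≠ xs n i} ∪ {i₀} := fun n hl => (hF n).2.1 hl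
  -- point-finiteness of the disagreement sets
  have hPF : ∀ i, {n | zs n i ≠ xs n i}.Finite := by
    intro i
    rcases Set.eq_empty_or_nonempty {n | zs n i ≠ xs n i} with hS | hS
    · rw [hS]; exact Set.finite_empty
    · have hmemLead : ∀ n, zs n i ≠ xs n i → Lead n := by
        intro n hn
        by_contra hnl
        rw [hzx n hnl] at hn
        exact hn rfl
      obtain ⟨n1, hn1⟩ := hS
      have hex0 : ∃ n, zs n i ≠ xs n i := ⟨n1, hn1⟩
      have hn0 : zs (Nat.find hex0) i ≠ xs (Nat.find hex0) i := Nat.find_spec hex0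
      have hi0 : i ∈ Set.range (βs (Nat.find hex0)) := by
        rw [(hlead _ (hmemLead _ hn0)).2.2]
        exact Or.inl hn0
      obtain ⟨k0, hk0⟩ := hi0
      apply Set.Finite.subset (Set.finite_Iic (max (Nat.find hex0) k0))
      intro n hn
      simp only [Set.mem_Iic]
      by_contra hgt
      push_neg at hgt
      have hn0n : Nat.find hex0 < n := lt_of_le_of_lt (le_max_left _ _) hgt
      have hk0n : k0 < n := lt_of_le_of_lt (le_max_right _ _) hgt
      have hiA : i ∈ Afin n F := Finset.mem_image.mpr
        ⟨(Nat.find hex0, k0), Finset.mem_product.mpr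
          ⟨Finset.mem_range.mpr hn0n, Finset.mem_range.mpr hk0n⟩, hk0⟩
      exact hn ((hlead n (hmemLead n hn)).1 i hiA)
  have hpC : ∀ n, Lead n → p n ∉ C := fun n hl hmem => (hlead n hl).2.1 (Or.inl hmem)
  have hplt : ∀ n m, Lead n → m < n → p n ≠ p m := by
    intro n m hl hm heq
    apply (hlead n hl).2.1
    right
    exact Set.mem_biUnion hm (by rw [Set.mem_singleton_iff]; exact heq)
  have hpinj : ∀ n m, Lead n → Lead m → p n = p m → n = m := by
    intro n m hln hlm heq
    rcases lt_trichotomy n m with hlt | heqq | hlt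
    · exact absurd heq.symm (hplt m n hlm hlt)
    · exact heqq
    · exact absurd heq (hplt n m hln hlt)
  have hcinj : ∀ n m, Lead n → Lead m → c n = c m → n = m := by
    intro n m hln hlm heq
    rcases lt_trichotomy n m with hlt | heqq | hlt
    · exact absurd heq (hlm n hlt)
    · exact heqq
    · exact absurd heq.symm (hln m hlt)
  let Gs : Set (Y × Y) := {q | ∃ n, Lead n ∧ q = (c n, p n)}
  -- the key closure property of the graph
  have hGcl : closure Gs ⊆ Gs ∪ Set.diagonal Y := by
    intro uv huv
    obtain ⟨𝒢, hG𝒢, h𝒢⟩ := mem_closure_iff_ultrafilter.mp huv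
    by_cases hsing : ∃ n, Lead n ∧ {(c n, p n)} ∈ 𝒢
    · obtain ⟨n, hl, hmem⟩ := hsing
      have : uv ∈ closure {(c n, p n)} := mem_closure_iff_ultrafilter.mpr ⟨𝒢, hmem, h𝒢⟩
      rw [closure_singleton, Set.mem_singleton_iff] at this
      exact Or.inl ⟨n, hl, this⟩
    · push_neg at hsing
      set t : ℕ → Y × Y := fun n => (c n, p n) with htdef
      set L : Set ℕ := {n | Lead n} with hLdef
      have hGt : ∀ q ∈ Gs, ∃ n, n ∈ L ∧ t n = q := by
        rintro q ⟨n, hl, rfl⟩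
        exact ⟨n, hl, rfl⟩
      haveI hne : (Filter.comap t ↑𝒢 ⊓ Filter.principal L).NeBot := by
        rw [Filter.neBot_iff]
        intro hbot
        have hmem : ∅ ∈ Filter.comap t ↑𝒢 ⊓ Filter.principal L := by
          rw [hbot]; exact Filter.mem_bot
        rw [Filter.mem_inf_iff] at hmem
        obtain ⟨t1, ht1, t2, ht2, hi⟩ := hmem
        rw [Filter.mem_principal] at ht2
        rw [Filter.mem_comap] at ht1
        obtain ⟨s0, hs0, hsub⟩ := ht1
        have hmem2 : (s0 ∩ Gs) ∈ 𝒢 := Filter.inter_mem hs0 hG𝒢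
        obtain ⟨qq, hqs0, hqG⟩ := Ultrafilter.nonempty_of_mem hmem2
        obtain ⟨n, hnL, rfl⟩ := hGt qq hqG
        have : n ∈ t1 ∩ t2 := ⟨hsub hqs0, ht2 hnL⟩
        rw [← hi] at this
        exact this
      obtain ⟨𝒰, h𝒰⟩ := Ultrafilter.exists_le (Filter.comap t ↑𝒢 ⊓ Filter.principal L)
      have h𝒰c : ↑𝒰 ≤ Filter.comap t ↑𝒢 := le_trans h𝒰 inf_le_left
      have h𝒰L : L ∈ 𝒰 := Filter.le_principal_iff.mp (le_trans h𝒰 inf_le_right)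
      have htend : Filter.Tendsto t ↑𝒰 ↑𝒢 := Filter.map_le_iff_le_comap.mpr h𝒰c
      have hmapeq : 𝒰.map t = 𝒢 := by
        apply Ultrafilter.coe_le_coe.mp
        rw [Ultrafilter.coe_map]
        exact htend
      have hnonpr : ∀ n : ℕ, {n} ∉ 𝒰 := by
        intro n hn
        by_cases hLn : Lead n
        · apply hsing n hLn
          have hpre : t ⁻¹' {t n} ∈ 𝒰 := by
            apply Filter.mem_of_superset hn
            intro m hm
            rw [Set.mem_singleton_iff] at hm
            subst hm
            exact rfl
          have : {t n} ∈ 𝒰.map t := hpre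
          rwa [hmapeq] at this
        · have h2 : ({n} ∩ L) ∈ 𝒰 := Filter.inter_mem hn h𝒰L
          have hemp : ({n} : Set ℕ) ∩ L = ∅ := by
            ext m
            simp only [Set.mem_inter_iff, Set.mem_singleton_iff, Set.mem_empty_iff_false,
              iff_false, not_and]
            rintro rfl
            exact hLn
          rw [hemp] at h2
          exact (Ultrafilter.nonempty_of_mem h2).ne_empty rfl
      have hcof : ∀ s : Set ℕ, s.Finite → sᶜ ∈ 𝒰 := by
        intro s hs
        rw [Ultrafilter.compl_mem_iff_notMem]
        intro hmem
        obtain ⟨a, _, hpure⟩ := Ultrafilter.eq_pure_of_finite_mem hs hmem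
        apply hnonpr a
        rw [hpure]
        exact rfl
      set sf : ℕ → (∀ i, Xa i) × (∀ i, Xa i) := fun n => (xs n, zs n) with hsfdef
      obtain ⟨ab, -, hab⟩ := isCompact_univ.ultrafilter_le_nhds (𝒰.map sf)
        (by rw [Filter.le_principal_iff]; exact Filter.univ_mem)
      have htends : Filter.Tendsto sf ↑𝒰 (𝓝 ab) := by
        show Filter.map sf ↑𝒰 ≤ 𝓝 ab
        rwa [← Ultrafilter.coe_map]
      have hcoord : ab.1 = ab.2 := by
        funext i
        have hEi : {n | xs n i = zs n i} ∈ 𝒰 := by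
          have hcompl := hcof _ (hPF i)
          apply Filter.mem_of_superset hcompl
          intro n hn
          simp only [Set.mem_compl_iff, Set.mem_setOf_eq, not_not] at hn
          exact hn.symm
        have h1 : Filter.Tendsto (fun n => xs n i) ↑𝒰 (𝓝 (ab.1 i)) :=
          (((continuous_apply i).comp continuous_fst).tendsto ab).comp htends
        have h2 : Filter.Tendsto (fun n => zs n i) ↑𝒰 (𝓝 (ab.2 i)) :=
          (((continuous_apply i).comp continuous_snd).tendsto ab).comp htends
        have h1' : Filter.Tendsto (fun n => zs n i) ↑𝒰 (𝓝 (ab.1 i)) := by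
          apply Filter.Tendsto.congr' _ h1
          exact Filter.eventuallyEq_of_mem hEi (fun n hn => hn)
        exact tendsto_nhds_unique h1' h2
      have hft : Filter.Tendsto t ↑𝒰 (𝓝 (f ab.1, f ab.2)) := by
        have hteq : t = fun n => (f (sf n).1, f (sf n).2) := by
          funext n
          show (c n, p n) = _
          rw [← hfx n]
        rw [hteq]
        exact (((hf.comp continuous_fst).prodMk (hf.comp continuous_snd)).tendsto ab).comp htends
      have huv2 : uv = (f ab.1, f ab.2) :=
        tendsto_nhds_unique (htend.mono_right h𝒢) hft
      right
      show uv.1 = uv.2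
      rw [huv2]
      show f ab.1 = f ab.2
      rw [hcoord]
  -- the equivalence relation
  let rel : Y → Y → Prop := fun a b => a = b ∨ (a, b) ∈ Gs ∨ (b, a) ∈ Gs
  have hrel_symm : ∀ a b, rel a b → rel b a := by
    intro a b hab
    rcases hab with rfl | hg | hg
    · exact Or.inl rfl
    · exact Or.inr (Or.inr hg)
    · exact Or.inr (Or.inl hg)
  have hrel_trans : ∀ a b c', rel a b → rel b c' → rel a c' := by
    intro a b c' hab hbc
    rcases hab with rfl | hg1 | hg1
    · exact hbc
    · rcases hbc with rfl | hg2 | hg2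
      · exact Or.inr (Or.inl hg1)
      · exfalso
        obtain ⟨n, hln, he1⟩ := hg1
        obtain ⟨m, hlm, he2⟩ := hg2
        have hb1 : b = p n := congrArg Prod.snd he1
        have hb2 : b = c m := congrArg Prod.fst he2
        apply hpC n hln
        have : p n = c m := by rw [← hb1, hb2]
        rw [this]
        exact hcC m
      · obtain ⟨n, hln, he1⟩ := hg1
        obtain ⟨m, hlm, he2⟩ := hg2
        have hb1 : b = p n := congrArg Prod.snd he1
        have hb2 : b = p m := congrArg Prod.snd he2
        have hnm : n = m := hpinj n m hln hlm (by rw [← hb1, hb2])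
        left
        have ha : a = c n := congrArg Prod.fst he1
        have hc' : c' = c m := congrArg Prod.fst he2
        rw [ha, hc', hnm]
    · rcases hbc with rfl | hg2 | hg2
      · exact Or.inr (Or.inr hg1)
      · obtain ⟨n, hln, he1⟩ := hg1
        obtain ⟨m, hlm, he2⟩ := hg2
        have hb1 : b = c n := congrArg Prod.fst he1
        have hb2 : b = c m := congrArg Prod.fst he2
        have hnm : n = m := hcinj n m hln hlm (by rw [← hb1, hb2])
        left
        have ha : a = p n := congrArg Prod.snd he1
        have hc' : c' = p m := congrArg Prod.snd he2
        rw [ha, hc', hnm]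
      · exfalso
        obtain ⟨n, hln, he1⟩ := hg1
        obtain ⟨m, hlm, he2⟩ := hg2
        have hb1 : b = c n := congrArg Prod.fst he1
        have hb2 : b = p m := congrArg Prod.snd he2
        apply hpC m hlm
        have : p m = c n := by rw [← hb2, hb1]
        rw [this]
        exact hcC n
  let st : Setoid Y := ⟨rel,
    ⟨fun a => Or.inl rfl, @fun a b hab => hrel_symm a b hab,
      @fun a b c' hab hbc => hrel_trans a b c' hab hbc⟩⟩
  have hGsub : Gs ⊆ {q : Y × Y | st.r q.1 q.2} := by
    rintro ⟨a, b⟩ hg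
    exact Or.inr (Or.inl hg)
  have hRclosed : IsClosed {q : Y × Y | st.r q.1 q.2} := by
    have hset : {q : Y × Y | st.r q.1 q.2} = Set.diagonal Y ∪ Gs ∪ Prod.swap ⁻¹' Gs := by
      ext ⟨y1, y2⟩
      constructor
      · rintro (hq | hq | hq)
        · exact Or.inl (Or.inl hq)
        · exact Or.inl (Or.inr hq)
        · exact Or.inr hq
      · rintro ((hq | hq) | hq)
        · exact Or.inl hq
        · exact Or.inr (Or.inl hq)
        · exact Or.inr (Or.inr hq)
    rw [hset]
    apply isClosed_of_closure_subset
    have h1 : closure (Set.diagonal Y ∪ Gs ∪ Prod.swap ⁻¹' Gs)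
        ⊆ closure (Set.diagonal Y) ∪ closure Gs ∪ closure (Prod.swap ⁻¹' Gs) := by
      rw [← closure_union, ← closure_union]
    intro q hq
    rcases h1 hq with (hq1 | hq1) | hq1
    · rw [isClosed_diagonal.closure_eq] at hq1
      exact Or.inl (Or.inl hq1)
    · rcases hGcl hq1 with hg | hd
      · exact Or.inl (Or.inr hg)
      · exact Or.inl (Or.inl hd)
    · have hq2 : q ∈ Prod.swap ⁻¹' closure Gs :=
        continuous_swap.closure_preimage_subset Gs hq1
      rcases hGcl hq2 with hg | hd
      · exact Or.inr hg
      · exact Or.inl (Or.inl (Set.mem_diagonal_iff.mpr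
          (Set.mem_diagonal_iff.mp hd).symm))
  haveI hT2K : T2Space (Quotient st) := quot_t2_aux14 st hRclosed
  refine ⟨Quotient st, inferInstance, inferInstance, hT2K, Quotient.mk st,
    continuous_quot_mk, ?_, ?_⟩
  · rintro ⟨y1, hy1⟩ ⟨y2, hy2⟩ hq
    apply Subtype.ext
    have hr : rel y1 y2 := Quotient.exact hq
    rcases hr with heq | hg | hg
    · exact heq
    · exfalso
      obtain ⟨n, hln, he⟩ := hg
      apply hy1
      have he1 : y1 = c n := congrArg Prod.fst he
      rw [he1]
      exact hcC n
    · exfalso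
      obtain ⟨n, hln, he⟩ := hg
      apply hy2
      have he1 : y2 = c n := congrArg Prod.fst he
      rw [he1]
      exact hcC n
  · intro k
    obtain ⟨y, rfl⟩ := Quotient.exists_rep k
    by_cases hyC : y ∈ C
    · have hyr : ∃ n, c n = y := by
        rw [hc] at hyC
        exact hyC
      have hn1 : c (Nat.find hyr) = y := Nat.find_spec hyr
      have hlead1 : Lead (Nat.find hyr) := by
        intro m hm heq
        exact Nat.find_min hyr hm (heq.trans hn1)
      refine ⟨⟨p (Nat.find hyr), hpC _ hlead1⟩, ?_⟩
      show Quotient.mk st (p (Nat.find hyr)) = Quotient.mk st y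
      apply Quotient.sound
      right; right
      show (y, p (Nat.find hyr)) ∈ Gs
      exact ⟨Nat.find hyr, hlead1, by rw [hn1]⟩
    · exact ⟨⟨y, hyC⟩, rfl⟩
end
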